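/- arXiv:1210.1342 — 6 statements merged into one kernel-verified Lean document; each statement's English description precedes it below -/
import Mathlib

section
/- Let α, β > -1. For all θ, φ ∈ (0,π) one has μ_{α,β}^+(B(θ, |θ-φ|)) ≍ |θ-φ| (θ+φ)^{2α+1} (2π-θ-φ)^{2β+1}, meaning there exist constants 0 < c ≤ C depending only on α and β such that c·|θ-φ|(θ+φ)^{2α+1}(2π-θ-φ)^{2β+1} ≤ μ_{α,β}^+(B(θ,|θ-φ|)) ≤ C·|θ-φ|(θ+φ)^{2α+1}(2π-θ-φ)^{2β+1} for all θ, φ ∈ (0,π). -/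
open MeasureTheory Real Set

noncomputable section

/-- The Jacobi measure `μ_{α,β}^+` on `(0,π)`: density
`(sin(θ/2))^(2α+1) (cos(θ/2))^(2β+1)` w.r.t. Lebesgue measure on `(0,π)`. -/
def jacobiMeasure (α β : ℝ) : Measure ℝ :=
  (volume.restrict (Ioo 0 π)).withDensity
    (fun θ => ENNReal.ofReal (Real.sin (θ / 2) ^ (2 * α + 1) * Real.cos (θ / 2) ^ (2 * β + 1)))

/-- The ball `B(θ,r) = (θ-r, θ+r) ∩ (0,π)`. -/
def jacobiBall (θ r : ℝ) : Set ℝ := Ioo (θ - r) (θ + r) ∩ Ioo 0 π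

/-- The measure `Π_α` on `[-1,1]`. -/
def PiMeasure (α : ℝ) : Measure ℝ :=
  if α = -(1 / 2) then (2 : ENNReal)⁻¹ • (Measure.dirac (-1) + Measure.dirac 1)
  else
    (volume.restrict (Icc (-1) 1)).withDensity
      (fun u => ENNReal.ofReal
        (Real.Gamma (α + 1) / (Real.sqrt π * Real.Gamma (α + 1 / 2)) * (1 - u ^ 2) ^ (α - 1 / 2)))

/-- `q(θ,φ,u,v) = 1 - u sin(θ/2) sin(φ/2) - v cos(θ/2) cos(φ/2)`. -/
def qfun (θ φ u v : ℝ) : ℝ :=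
  1 - u * Real.sin (θ / 2) * Real.sin (φ / 2) - v * Real.cos (θ / 2) * Real.cos (φ / 2)

/-- `Ψ^{α,β}(t,s) = sinh(t/2) / (cosh(t/2) - 1 + s)^(α+β+2)`. -/
def Psi (α β t s : ℝ) : ℝ :=
  Real.sinh (t / 2) / (Real.cosh (t / 2) - 1 + s) ^ (α + β + 2)

/-- The Jacobi-Poisson kernel `H_t^{α,β}(θ,φ)`. -/
def Hker (α β t θ φ : ℝ) : ℝ :=
  ((2 : ℝ) ^ (-(α + β + 2)) / (jacobiMeasure α β (Ioo 0 π)).toReal) * Real.sinh (t / 2) *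
    ∫ u, ∫ v, 1 / (Real.cosh (t / 2) - 1 + qfun θ φ u v) ^ (α + β + 2)
      ∂(PiMeasure β) ∂(PiMeasure α)

/-- The symmetrized kernel `H̃_t^{α,β}(θ,φ) = (1/4) sin θ sin φ H_t^{α+1,β+1}(θ,φ)`. -/
def Htilde (α β t θ φ : ℝ) : ℝ :=
  (1 / 4) * Real.sin θ * Real.sin φ * Hker (α + 1) (β + 1) t θ φ

end

/-!
Write `a = 2α + 1`, `b = 2β + 1`. By Jordan's inequality the density
`sin (x/2) ^ a * cos (x/2) ^ b` is comparable to the model weight `x ^ a * (π - x) ^ b` on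
`(0, π)`, and the model measure of an interval `(u, v) ⊆ (0, π)` is comparable to
`(v - u) * v ^ a * (π - u) ^ b`: from below via the middle half of `(u, v)`, where `x ≍ v` and
`π - x ≍ π - u`; from above by splitting `(u, v)` at its midpoint, where one factor of the
weight is comparable to a constant and the other is integrated exactly. The ball `B(θ, |θ - φ|)`
is such an interval, with `v - u ≍ |θ - φ|`, `v ≍ θ + φ` and `π - u ≍ 2π - θ - φ`.
-/

open intervalIntegral

lemma rpow_le_rpow_abs_mul_rpow {x y K : ℝ} (a : ℝ) (hx : 0 < x) (hy : 0 < y)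
    (hxy : x ≤ K * y) (hyx : y ≤ K * x) : x ^ a ≤ K ^ |a| * y ^ a := by
  have hK : 0 < K := pos_of_mul_pos_left (hx.trans_le hxy) hy.le
  have hlog : |log (x / y)| ≤ log K := by
    refine abs_le.2 ⟨?_, log_le_log (div_pos hx hy) ((div_le_iff₀ hy).2 hxy)⟩
    rw [neg_le, ← log_inv, inv_div]
    exact log_le_log (div_pos hy hx) ((div_le_iff₀ hx).2 hyx)
  calc x ^ a = (x / y) ^ a * y ^ a := by
        rw [div_rpow hx.le hy.le, div_mul_cancel₀ _ (rpow_pos_of_pos hy a).ne']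
    _ ≤ K ^ |a| * y ^ a := by
        gcongr
        rw [rpow_def_of_pos (div_pos hx hy), rpow_def_of_pos hK]
        refine exp_le_exp.2 ?_
        calc log (x / y) * a ≤ |log (x / y)| * |a| := by
              rw [← abs_mul]; exact le_abs_self _
          _ ≤ log K * |a| := by gcongr

lemma rpow_mul_rpow_le_pow_abs_mul (a b : ℝ) {K x x' y y' : ℝ} (hx : 0 < x) (hx' : 0 < x')
    (hy : 0 < y) (hy' : 0 < y') (hxx' : x ≤ K * x') (hx'x : x' ≤ K * x) (hyy' : y ≤ K * y')
    (hy'y : y' ≤ K * y) : x ^ a * y ^ b ≤ K ^ |a| * K ^ |b| * (x' ^ a * y' ^ b) :=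
  calc x ^ a * y ^ b ≤ (K ^ |a| * x' ^ a) * (K ^ |b| * y' ^ b) :=
        mul_le_mul (rpow_le_rpow_abs_mul_rpow a hx hx' hxx' hx'x)
          (rpow_le_rpow_abs_mul_rpow b hy hy' hyy' hy'y) (rpow_nonneg hy.le b)
          (mul_nonneg (rpow_nonneg (by nlinarith) _) (rpow_nonneg hx'.le a))
    _ = K ^ |a| * K ^ |b| * (x' ^ a * y' ^ b) := by ring

lemma mul_rpow_mul_rpow_le_mul_pow_abs_mul (a b : ℝ) {K r r' x x' y y' : ℝ} (hr : 0 ≤ r)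
    (hrr' : r ≤ K * r') (hx : 0 < x) (hx' : 0 < x') (hy : 0 < y) (hy' : 0 < y')
    (hxx' : x ≤ K * x') (hx'x : x' ≤ K * x) (hyy' : y ≤ K * y') (hy'y : y' ≤ K * y) :
    r * x ^ a * y ^ b ≤ K * K ^ |a| * K ^ |b| * (r' * x' ^ a * y' ^ b) :=
  calc r * x ^ a * y ^ b = r * (x ^ a * y ^ b) := mul_assoc _ _ _
    _ ≤ (K * r') * (K ^ |a| * K ^ |b| * (x' ^ a * y' ^ b)) :=
        mul_le_mul hrr' (rpow_mul_rpow_le_pow_abs_mul a b hx hx' hy hy' hxx' hx'x hyy' hy'y)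
          (by positivity) (hr.trans hrr')
    _ = K * K ^ |a| * K ^ |b| * (r' * x' ^ a * y' ^ b) := by ring

lemma intervalIntegral_rpow_le {a u v : ℝ} (ha : -1 < a) (hu : 0 ≤ u) (huv : u ≤ v) :
    ∫ x in u..v, x ^ a ≤ max 1 (a + 1)⁻¹ * ((v - u) * v ^ a) := by
  have hbound : 0 ≤ (v - u) * v ^ a :=
    mul_nonneg (sub_nonneg.2 huv) (rpow_nonneg (hu.trans huv) a)
  rcases le_or_gt 0 a with ha0 | ha0
  · calc ∫ x in u..v, x ^ a ≤ ∫ _ in u..v, v ^ a :=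
          intervalIntegral.integral_mono_on huv (intervalIntegrable_rpow' ha)
            intervalIntegrable_const fun x hx => rpow_le_rpow (hu.trans hx.1) hx.2 ha0
      _ = (v - u) * v ^ a := by simp
      _ ≤ _ := le_mul_of_one_le_left hbound (le_max_left _ _)
  · have ha1 : a + 1 ≠ 0 := by linarith
    have hconc : u * v ^ a ≤ u ^ (a + 1) := by
      rw [rpow_add_one' hu ha1, mul_comm]
      rcases hu.eq_or_lt with rfl | hu
      · simp
      · exact mul_le_mul_of_nonneg_right (rpow_le_rpow_of_nonpos hu huv ha0.le) hu.le
    calc ∫ x in u..v, x ^ a = (v ^ (a + 1) - u ^ (a + 1)) / (a + 1) := integral_rpow (Or.inl ha)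
      _ ≤ (a + 1)⁻¹ * ((v - u) * v ^ a) := by
          rw [div_eq_inv_mul, rpow_add_one' (hu.trans huv) ha1]
          exact mul_le_mul_of_nonneg_left (by nlinarith) (inv_nonneg.2 (by linarith))
      _ ≤ _ := mul_le_mul_of_nonneg_right (le_max_right _ _) hbound

lemma intervalIntegral_sub_rpow_le {a c u v : ℝ} (ha : -1 < a) (huv : u ≤ v) (hvc : v ≤ c) :
    ∫ x in u..v, (c - x) ^ a ≤ max 1 (a + 1)⁻¹ * ((v - u) * (c - u) ^ a) := by
  rw [intervalIntegral.integral_comp_sub_left (fun x => x ^ a)]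
  convert intervalIntegral_rpow_le ha (sub_nonneg.2 hvc) (sub_le_sub_left huv c) using 3
  ring

lemma setLIntegral_Ioc_ofReal_eq {f : ℝ → ℝ} {u v : ℝ} (huv : u ≤ v)
    (hf : IntervalIntegrable f volume u v) (hf0 : ∀ x ∈ Ioc u v, 0 ≤ f x) :
    ∫⁻ x in Ioc u v, ENNReal.ofReal (f x) = ENNReal.ofReal (∫ x in u..v, f x) := by
  rw [intervalIntegral.integral_of_le huv, ofReal_integral_eq_lintegral_ofReal
    ((intervalIntegrable_iff_integrableOn_Ioc_of_le huv).1 hf)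
    ((ae_restrict_iff' measurableSet_Ioc).2 (ae_of_all _ hf0))]

lemma ofReal_le_setLIntegral_rpow_mul_rpow (a b : ℝ) {u v : ℝ} (hu : 0 ≤ u) (huv : u ≤ v)
    (hv : v ≤ π) :
    ENNReal.ofReal ((v - u) * v ^ a * (π - u) ^ b / (2 * 4 ^ |a| * 4 ^ |b|)) ≤
      ∫⁻ x in Ioo u v, ENNReal.ofReal (x ^ a * (π - x) ^ b) := by
  rcases huv.eq_or_lt with rfl | huv
  · simp
  set J := Ioo (u + (v - u) / 4) (u + 3 * (v - u) / 4)
  have hpoint : ∀ x ∈ J,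
      v ^ a * (π - u) ^ b / (4 ^ |a| * 4 ^ |b|) ≤ x ^ a * (π - x) ^ b := by
    rintro x ⟨hx₁, hx₂⟩
    rw [div_le_iff₀' (by positivity)]
    exact rpow_mul_rpow_le_pow_abs_mul a b (by linarith) (by linarith) (by linarith)
      (by linarith) (by linarith) (by linarith) (by linarith) (by linarith)
  calc ENNReal.ofReal ((v - u) * v ^ a * (π - u) ^ b / (2 * 4 ^ |a| * 4 ^ |b|))
      = ∫⁻ _ in J, ENNReal.ofReal (v ^ a * (π - u) ^ b / (4 ^ |a| * 4 ^ |b|)) := by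
        have hw : 0 ≤ v ^ a * (π - u) ^ b / (4 ^ |a| * 4 ^ |b|) := by
          have := rpow_nonneg (show 0 ≤ π - u by linarith) b
          have := rpow_nonneg (hu.trans huv.le) a
          positivity
        rw [setLIntegral_const, Real.volume_Ioo, ← ENNReal.ofReal_mul hw]
        congr 1
        ring
    _ ≤ ∫⁻ x in J, ENNReal.ofReal (x ^ a * (π - x) ^ b) :=
        setLIntegral_mono' measurableSet_Ioo fun x hx => ENNReal.ofReal_le_ofReal (hpoint x hx)
    _ ≤ ∫⁻ x in Ioo u v, ENNReal.ofReal (x ^ a * (π - x) ^ b) :=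
        lintegral_mono_set (Ioo_subset_Ioo (by linarith) (by linarith))

lemma setLIntegral_Ioc_rpow_mul_rpow_le_of_far_from_pi {a b u m : ℝ} (ha : -1 < a) (hu : 0 ≤ u)
    (hum : u ≤ m) (hmπ : m < π) (hm : π - u ≤ 2 * (π - m)) :
    ∫⁻ x in Ioc u m, ENNReal.ofReal (x ^ a * (π - x) ^ b) ≤
      ENNReal.ofReal (2 ^ |b| * (π - u) ^ b * (max 1 (a + 1)⁻¹ * ((m - u) * m ^ a))) := by
  have hπub : 0 ≤ (π - u) ^ b := rpow_nonneg (by linarith) b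
  calc _ ≤ ∫⁻ x in Ioc u m,
        ENNReal.ofReal (2 ^ |b| * (π - u) ^ b) * ENNReal.ofReal (x ^ a) := by
        refine setLIntegral_mono' measurableSet_Ioc fun x ⟨hx₁, hx₂⟩ => ?_
        rw [← ENNReal.ofReal_mul (by positivity), mul_comm (x ^ a)]
        exact ENNReal.ofReal_le_ofReal (mul_le_mul_of_nonneg_right
          (rpow_le_rpow_abs_mul_rpow b (by linarith) (by linarith) (by linarith) (by linarith))
          (rpow_nonneg (by linarith) a))
    _ = ENNReal.ofReal (2 ^ |b| * (π - u) ^ b) * ENNReal.ofReal (∫ x in u..m, x ^ a) := by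
        rw [lintegral_const_mul' _ _ ENNReal.ofReal_ne_top, setLIntegral_Ioc_ofReal_eq hum
          (intervalIntegrable_rpow' ha) fun x hx => rpow_nonneg (by linarith [hx.1]) a]
    _ ≤ _ := by
        rw [← ENNReal.ofReal_mul (by positivity)]
        exact ENNReal.ofReal_le_ofReal (mul_le_mul_of_nonneg_left
          (intervalIntegral_rpow_le ha hu hum) (by positivity))

lemma setLIntegral_Ioc_rpow_mul_rpow_le_of_far_from_zero {a b m v : ℝ} (hb : -1 < b) (hm : 0 < m)
    (hmv : m ≤ v) (hv : v ≤ π) (hvm : v ≤ 2 * m) :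
    ∫⁻ x in Ioc m v, ENNReal.ofReal (x ^ a * (π - x) ^ b) ≤
      ENNReal.ofReal (2 ^ |a| * v ^ a * (max 1 (b + 1)⁻¹ * ((v - m) * (π - m) ^ b))) := by
  have hva : 0 ≤ v ^ a := rpow_nonneg (by linarith) a
  calc _ ≤ ∫⁻ x in Ioc m v,
        ENNReal.ofReal (2 ^ |a| * v ^ a) * ENNReal.ofReal ((π - x) ^ b) := by
        refine setLIntegral_mono' measurableSet_Ioc fun x ⟨hx₁, hx₂⟩ => ?_
        rw [← ENNReal.ofReal_mul (by positivity)]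
        exact ENNReal.ofReal_le_ofReal (mul_le_mul_of_nonneg_right
          (rpow_le_rpow_abs_mul_rpow a (by linarith) (by linarith) (by linarith) (by linarith))
          (rpow_nonneg (by linarith) b))
    _ = ENNReal.ofReal (2 ^ |a| * v ^ a) * ENNReal.ofReal (∫ x in m..v, (π - x) ^ b) := by
        rw [lintegral_const_mul' _ _ ENNReal.ofReal_ne_top, setLIntegral_Ioc_ofReal_eq hmv
          (by simpa using
            (intervalIntegrable_rpow' hb (a := π - m) (b := π - v)).comp_sub_left π)
          fun x hx => rpow_nonneg (by linarith [hx.2]) b]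
    _ ≤ _ := by
        rw [← ENNReal.ofReal_mul (by positivity)]
        exact ENNReal.ofReal_le_ofReal (mul_le_mul_of_nonneg_left
          (intervalIntegral_sub_rpow_le hb hmv hv) (by positivity))

lemma setLIntegral_rpow_mul_rpow_le {a b u v : ℝ} (ha : -1 < a) (hb : -1 < b) (hu : 0 ≤ u)
    (huv : u ≤ v) (hv : v ≤ π) :
    ∫⁻ x in Ioo u v, ENNReal.ofReal (x ^ a * (π - x) ^ b) ≤
      ENNReal.ofReal (2 ^ |a| * 2 ^ |b| * (max 1 (a + 1)⁻¹ + max 1 (b + 1)⁻¹) *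
        ((v - u) * v ^ a * (π - u) ^ b)) := by
  rcases huv.eq_or_lt with rfl | huv
  · simp
  set m := (u + v) / 2 with hm
  have hπu : 0 < π - u := by linarith
  have hma := rpow_le_rpow_abs_mul_rpow a (K := 2) (x := m) (y := v)
    (by linarith) (by linarith) (by linarith) (by linarith)
  have hmb := rpow_le_rpow_abs_mul_rpow b (K := 2) (x := π - m) (y := π - u)
    (by linarith) hπu (by linarith) (by linarith)
  have hva : 0 ≤ v ^ a := rpow_nonneg (by linarith) a
  have hπub : 0 ≤ (π - u) ^ b := rpow_nonneg hπu.le b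
  have hma₀ : 0 ≤ m ^ a := rpow_nonneg (by linarith) a
  have hmb₀ : 0 ≤ (π - m) ^ b := rpow_nonneg (by linarith) b
  have hmu : 0 ≤ m - u := by linarith
  have hvm : 0 ≤ v - m := by linarith
  calc ∫⁻ x in Ioo u v, ENNReal.ofReal (x ^ a * (π - x) ^ b)
      ≤ ∫⁻ x in Ioc u m ∪ Ioc m v, ENNReal.ofReal (x ^ a * (π - x) ^ b) := by
        rw [Ioc_union_Ioc_eq_Ioc (by linarith) (by linarith)]
        exact lintegral_mono_set Ioo_subset_Ioc_self
    _ ≤ _ := (lintegral_union_le _ _ _).trans <| add_le_add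
        (setLIntegral_Ioc_rpow_mul_rpow_le_of_far_from_pi ha hu (by linarith) (by linarith)
          (by linarith))
        (setLIntegral_Ioc_rpow_mul_rpow_le_of_far_from_zero hb (by linarith) (by linarith) hv
          (by linarith))
    _ ≤ _ := by
        rw [← ENNReal.ofReal_add (by positivity) (by positivity)]
        refine ENNReal.ofReal_le_ofReal ?_
        rw [show m - u = (v - u) / 2 by linarith, show v - m = (v - u) / 2 by linarith]
        have hvu : 0 ≤ (v - u) / 2 := by linarith
        calc _ ≤
              2 ^ |b| * (π - u) ^ b * (max 1 (a + 1)⁻¹ * ((v - u) / 2 * (2 ^ |a| * v ^ a))) +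
              2 ^ |a| * v ^ a * (max 1 (b + 1)⁻¹ * ((v - u) / 2 * (2 ^ |b| * (π - u) ^ b))) :=
              add_le_add (by gcongr) (by gcongr)
          _ = 2 ^ |a| * 2 ^ |b| * (max 1 (a + 1)⁻¹ + max 1 (b + 1)⁻¹) *
                ((v - u) * v ^ a * (π - u) ^ b) / 2 := by ring
          _ ≤ _ := half_le_self (by positivity)

lemma sin_half_le_pi_mul {x : ℝ} (hx : 0 ≤ x) : sin (x / 2) ≤ π * x :=
  (sin_le (by linarith)).trans (by nlinarith [pi_gt_three])

lemma le_pi_mul_sin_half {x : ℝ} (hx : 0 ≤ x) (hxπ : x ≤ π) : x ≤ π * sin (x / 2) :=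
  calc x = π * (2 / π * (x / 2)) := by field_simp
    _ ≤ π * sin (x / 2) := by gcongr; exact mul_le_sin (by linarith) (by linarith)

lemma sin_half_rpow_mul_cos_half_rpow_comparable (a b : ℝ) {x : ℝ} (hx : x ∈ Ioo 0 π) :
    sin (x / 2) ^ a * cos (x / 2) ^ b ≤ π ^ |a| * π ^ |b| * (x ^ a * (π - x) ^ b) ∧
      x ^ a * (π - x) ^ b ≤ π ^ |a| * π ^ |b| * (sin (x / 2) ^ a * cos (x / 2) ^ b) := by
  obtain ⟨hx₀, hxπ⟩ := hx
  have hcos : cos (x / 2) = sin ((π - x) / 2) := by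
    rw [← sin_pi_div_two_sub]; ring_nf
  have hsin₀ : 0 < sin (x / 2) := sin_pos_of_pos_of_lt_pi (by linarith) (by linarith)
  have hcos₀ : 0 < sin ((π - x) / 2) := sin_pos_of_pos_of_lt_pi (by linarith) (by linarith)
  rw [hcos]
  exact ⟨rpow_mul_rpow_le_pow_abs_mul a b hsin₀ hx₀ hcos₀ (by linarith)
      (sin_half_le_pi_mul hx₀.le) (le_pi_mul_sin_half hx₀.le hxπ.le)
      (sin_half_le_pi_mul (by linarith)) (le_pi_mul_sin_half (by linarith) (by linarith)),
    rpow_mul_rpow_le_pow_abs_mul a b hx₀ hsin₀ (by linarith) hcos₀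
      (le_pi_mul_sin_half hx₀.le hxπ.le) (sin_half_le_pi_mul hx₀.le)
      (le_pi_mul_sin_half (by linarith) (by linarith)) (sin_half_le_pi_mul (by linarith))⟩

lemma jacobiMeasure_Ioo (α β : ℝ) {u v : ℝ} (hu : 0 ≤ u) (hv : v ≤ π) :
    jacobiMeasure α β (Ioo u v) =
      ∫⁻ x in Ioo u v,
        ENNReal.ofReal (sin (x / 2) ^ (2 * α + 1) * cos (x / 2) ^ (2 * β + 1)) := by
  rw [jacobiMeasure, withDensity_apply _ measurableSet_Ioo, Measure.restrict_restrict
    measurableSet_Ioo, inter_eq_left.2 (Ioo_subset_Ioo hu hv)]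

lemma jacobiMeasure_Ioo_comparable {α β : ℝ} (hα : -1 < α) (hβ : -1 < β) :
    ∃ c > 0, ∃ C > 0, ∀ u v, 0 ≤ u → u ≤ v → v ≤ π →
      ENNReal.ofReal (c * ((v - u) * v ^ (2 * α + 1) * (π - u) ^ (2 * β + 1))) ≤
          jacobiMeasure α β (Ioo u v) ∧
        jacobiMeasure α β (Ioo u v) ≤
          ENNReal.ofReal (C * ((v - u) * v ^ (2 * α + 1) * (π - u) ^ (2 * β + 1))) := by
  set a := 2 * α + 1
  set b := 2 * β + 1
  set K := π ^ |a| * π ^ |b|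
  have hK : 0 < K := by positivity
  refine ⟨(K * (2 * 4 ^ |a| * 4 ^ |b|))⁻¹, by positivity,
    K * (2 ^ |a| * 2 ^ |b| * (max 1 (a + 1)⁻¹ + max 1 (b + 1)⁻¹)), by positivity,
    fun u v hu huv hv => ⟨?_, ?_⟩⟩
  all_goals rw [jacobiMeasure_Ioo α β hu hv]
  · calc _ = ENNReal.ofReal K⁻¹ *
            ENNReal.ofReal ((v - u) * v ^ a * (π - u) ^ b / (2 * 4 ^ |a| * 4 ^ |b|)) := by
          rw [← ENNReal.ofReal_mul (inv_nonneg.2 hK.le), mul_inv]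
          ring_nf
      _ ≤ ENNReal.ofReal K⁻¹ * ∫⁻ x in Ioo u v, ENNReal.ofReal (x ^ a * (π - x) ^ b) := by
          gcongr
          exact ofReal_le_setLIntegral_rpow_mul_rpow a b hu huv hv
      _ = ∫⁻ x in Ioo u v, ENNReal.ofReal K⁻¹ * ENNReal.ofReal (x ^ a * (π - x) ^ b) :=
          (lintegral_const_mul' _ _ ENNReal.ofReal_ne_top).symm
      _ ≤ _ := setLIntegral_mono' measurableSet_Ioo fun x hx => by
          rw [← ENNReal.ofReal_mul (inv_nonneg.2 hK.le)]
          exact ENNReal.ofReal_le_ofReal ((inv_mul_le_iff₀ hK).2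
            (sin_half_rpow_mul_cos_half_rpow_comparable a b (Ioo_subset_Ioo hu hv hx)).2)
  · calc _ ≤ ∫⁻ x in Ioo u v, ENNReal.ofReal K * ENNReal.ofReal (x ^ a * (π - x) ^ b) :=
          setLIntegral_mono' measurableSet_Ioo fun x hx => by
            rw [← ENNReal.ofReal_mul hK.le]
            exact ENNReal.ofReal_le_ofReal (sin_half_rpow_mul_cos_half_rpow_comparable a b
              (Ioo_subset_Ioo hu hv hx)).1
      _ = ENNReal.ofReal K * ∫⁻ x in Ioo u v, ENNReal.ofReal (x ^ a * (π - x) ^ b) :=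
          lintegral_const_mul' _ _ ENNReal.ofReal_ne_top
      _ ≤ _ := by
          grw [setLIntegral_rpow_mul_rpow_le (by linarith) (by linarith) hu huv hv,
            ← ENNReal.ofReal_mul hK.le, ← mul_assoc]

lemma jacobiBall_eq_Ioo (θ r : ℝ) :
    jacobiBall θ r = Ioo (max 0 (θ - r)) (min π (θ + r)) := by
  rw [jacobiBall, Ioo_inter_Ioo, max_comm, min_comm]

lemma exists_jacobiBall_abs_sub_eq_Ioo (a b : ℝ) {θ φ : ℝ} (hθ : θ ∈ Ioo 0 π)
    (hφ : φ ∈ Ioo 0 π) :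
    ∃ u v, jacobiBall θ |θ - φ| = Ioo u v ∧ 0 ≤ u ∧ u ≤ v ∧ v ≤ π ∧
      (v - u) * v ^ a * (π - u) ^ b ≤
        2 * 2 ^ |a| * 2 ^ |b| * (|θ - φ| * (θ + φ) ^ a * (2 * π - θ - φ) ^ b) ∧
      |θ - φ| * (θ + φ) ^ a * (2 * π - θ - φ) ^ b ≤
        2 * 2 ^ |a| * 2 ^ |b| * ((v - u) * v ^ a * (π - u) ^ b) := by
  obtain ⟨hθ₀, hθπ⟩ := hθ
  obtain ⟨hφ₀, hφπ⟩ := hφ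
  set u := max 0 (θ - |θ - φ|)
  set v := min π (θ + |θ - φ|)
  have hcomp : |θ - φ| ≤ 2 * (v - u) ∧ v - u ≤ 2 * |θ - φ| ∧
      v ≤ 2 * (θ + φ) ∧ θ + φ ≤ 2 * v ∧
      π - u ≤ 2 * (2 * π - θ - φ) ∧ 2 * π - θ - φ ≤ 2 * (π - u) ∧
      0 < v ∧ u < π := by
    rcases abs_cases (θ - φ) with ⟨h, _⟩ | ⟨h, _⟩ <;>
    rcases max_cases 0 (θ - |θ - φ|) with ⟨hu, _⟩ | ⟨hu, _⟩ <;>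
    rcases min_cases π (θ + |θ - φ|) with ⟨hv, _⟩ | ⟨hv, _⟩ <;>
    simp only [u, v, hu, hv, h] at * <;> refine ⟨?_, ?_, ?_, ?_, ?_, ?_, ?_, ?_⟩ <;> linarith
  obtain ⟨hr₁, hr₂, hv₁, hv₂, hu₁, hu₂, hv₀, huπ⟩ := hcomp
  refine ⟨u, v, jacobiBall_eq_Ioo _ _, le_max_left _ _, by linarith, min_le_left _ _, ?_, ?_⟩
  · exact mul_rpow_mul_rpow_le_mul_pow_abs_mul a b (by linarith) hr₂ hv₀ (by linarith)
      (by linarith) (by linarith) hv₁ hv₂ hu₁ hu₂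
  · exact mul_rpow_mul_rpow_le_mul_pow_abs_mul a b (abs_nonneg _) hr₁ (by linarith) hv₀
      (by linarith) (by linarith) hv₂ hv₁ hu₂ hu₁

/-- two-sided estimate for the Jacobi measure of the ball
`B(θ,|θ-φ|)`. -/
theorem jacobi_ball_measure_comparison (α β : ℝ) (hα : -1 < α) (hβ : -1 < β) :
    ∃ c C : ℝ, 0 < c ∧ c ≤ C ∧
      ∀ θ ∈ Ioo (0 : ℝ) π, ∀ φ ∈ Ioo (0 : ℝ) π,
        ENNReal.ofReal
            (c * (|θ - φ| * (θ + φ) ^ (2 * α + 1) * (2 * π - θ - φ) ^ (2 * β + 1)))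
          ≤ jacobiMeasure α β (jacobiBall θ |θ - φ|) ∧
        jacobiMeasure α β (jacobiBall θ |θ - φ|)
          ≤ ENNReal.ofReal
            (C * (|θ - φ| * (θ + φ) ^ (2 * α + 1) * (2 * π - θ - φ) ^ (2 * β + 1))) := by
  obtain ⟨c, hc, C, hC, hμ⟩ := jacobiMeasure_Ioo_comparable hα hβ
  set K : ℝ := 2 * 2 ^ |2 * α + 1| * 2 ^ |2 * β + 1|
  have hK : 0 < K := by positivity
  refine ⟨c / K, max (c / K) (C * K), by positivity, le_max_left _ _, fun θ hθ φ hφ => ?_⟩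
  obtain ⟨u, v, hball, hu, huv, hv, hPG, hGP⟩ :=
    exists_jacobiBall_abs_sub_eq_Ioo (2 * α + 1) (2 * β + 1) hθ hφ
  have hG : 0 ≤ |θ - φ| * (θ + φ) ^ (2 * α + 1) * (2 * π - θ - φ) ^ (2 * β + 1) :=
    mul_nonneg (mul_nonneg (abs_nonneg _) (rpow_nonneg (by linarith [hθ.1, hφ.1]) _))
      (rpow_nonneg (by linarith [hθ.2, hφ.2]) _)
  obtain ⟨hlow, hup⟩ := hμ u v hu huv hv
  rw [hball]
  refine ⟨le_trans (ENNReal.ofReal_le_ofReal ?_) hlow, hup.trans (ENNReal.ofReal_le_ofReal ?_)⟩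
  · calc c / K * _ ≤ c / K * (K * _) := mul_le_mul_of_nonneg_left hGP (by positivity)
      _ = c * _ := by field_simp
  · calc C * _ ≤ C * (K * _) := mul_le_mul_of_nonneg_left hPG hC.le
      _ ≤ max (c / K) (C * K) * _ := by
          rw [← mul_assoc]
          exact mul_le_mul_of_nonneg_right (le_max_right _ _) hG
end

section
/- Let α, β > -1 and γ₁, γ₂ ≥ 0. Then μ_{α+γ₁, β+γ₂}^+(B(θ, |θ-φ|)) ≍ (θ+φ)^{2γ₁} (2π-θ-φ)^{2γ₂} μ_{α,β}^+(B(θ, |θ-φ|)) uniformly in θ, φ ∈ (0,π); i.e., there exist constants 0 < c ≤ C depending only on α, β, γ₁, γ₂ such that the two-sided comparison holds for all θ, φ ∈ (0,π). -/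
/-!
On `B(θ, |θ - φ|)` the Jacobi density `sin (ψ/2) ^ (2α+1) * cos (ψ/2) ^ (2β+1)` is comparable
to `ψ ^ p * (π - ψ) ^ q` with `p = 2α+1`, `q = 2β+1`, and for `0 ≤ a ≤ b ≤ π` the integral of
`ψ ^ p * (π - ψ) ^ q` over `(a, b)` is comparable to `(b - a) * b ^ p * (π - a) ^ q`: half of the
interval sees `ψ ≍ b` and the other half `π - ψ ≍ π - a`, and `p, q > -1` makes the remaining
one-sided power integrable with the right size. For the ball, `b - a ≍ |θ - φ|`, `b ≍ θ + φ` and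
`π - a ≍ 2π - θ - φ`, so
`μ_{α,β}(B(θ, |θ - φ|)) ≍ |θ - φ| (θ + φ) ^ (2α+1) (2π - θ - φ) ^ (2β+1)`,
and raising `α, β` by `γ₁, γ₂` multiplies the right-hand side by exactly
`(θ + φ) ^ (2γ₁) (2π - θ - φ) ^ (2γ₂)`.
-/

open MeasureTheory Real Set

open scoped NNReal ENNReal

/-- `f ≍ g` on `s`, with constants uniform over `s`. -/
def ComparableOn {ι : Type*} (s : Set ι) (f g : ι → ℝ≥0∞) : Prop :=
  ∃ c C : ℝ≥0, 0 < c ∧ c ≤ C ∧ ∀ i ∈ s, c * g i ≤ f i ∧ f i ≤ C * g i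

namespace ComparableOn

variable {ι κ : Type*} {s : Set ι} {f g k f' g' : ι → ℝ≥0∞}

lemma of_ofReal_mul_le {c C : ℝ} (hc : 0 < c)
    (h : ∀ i ∈ s, ENNReal.ofReal c * g i ≤ f i ∧ f i ≤ ENNReal.ofReal C * g i) :
    ComparableOn s f g := by
  refine ⟨c.toNNReal, (max C c).toNNReal, by simpa using hc,
    Real.toNNReal_le_toNNReal (le_max_right _ _), fun i hi => ⟨(h i hi).1, (h i hi).2.trans ?_⟩⟩
  exact mul_le_mul_left (ENNReal.ofReal_le_ofReal (le_max_left _ _)) _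

protected lemma refl (s : Set ι) (f : ι → ℝ≥0∞) : ComparableOn s f f :=
  ⟨1, 1, one_pos, le_rfl, fun _ _ => by simp⟩

lemma congr (h : ComparableOn s f g) (hf : EqOn f f' s) (hg : EqOn g g' s) :
    ComparableOn s f' g' := by
  obtain ⟨c, C, hc, hcC, hfg⟩ := h
  exact ⟨c, C, hc, hcC, fun i hi => hf hi ▸ hg hi ▸ hfg i hi⟩

lemma symm (h : ComparableOn s f g) : ComparableOn s g f := by
  obtain ⟨c, C, hc, hcC, hfg⟩ := h
  have hC : 0 < C := hc.trans_le hcC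
  refine ⟨C⁻¹, c⁻¹, inv_pos.2 hC, inv_anti₀ hc hcC, fun i hi => ⟨?_, ?_⟩⟩
  · calc (C⁻¹ : ℝ≥0) * f i ≤ (C⁻¹ : ℝ≥0) * (C * g i) := by gcongr; exact (hfg i hi).2
      _ = g i := by
          rw [← mul_assoc, ← ENNReal.coe_mul, inv_mul_cancel₀ hC.ne', ENNReal.coe_one, one_mul]
  · calc g i = (c⁻¹ : ℝ≥0) * (c * g i) := by
          rw [← mul_assoc, ← ENNReal.coe_mul, inv_mul_cancel₀ hc.ne', ENNReal.coe_one, one_mul]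
      _ ≤ (c⁻¹ : ℝ≥0) * f i := by gcongr; exact (hfg i hi).1

lemma trans (hfg : ComparableOn s f g) (hgk : ComparableOn s g k) : ComparableOn s f k := by
  obtain ⟨c₁, C₁, hc₁, hcC₁, h₁⟩ := hfg
  obtain ⟨c₂, C₂, hc₂, hcC₂, h₂⟩ := hgk
  refine ⟨c₁ * c₂, C₁ * C₂, mul_pos hc₁ hc₂, mul_le_mul' hcC₁ hcC₂, fun i hi => ⟨?_, ?_⟩⟩
  · calc ((c₁ * c₂ : ℝ≥0) : ℝ≥0∞) * k i = c₁ * (c₂ * k i) := by push_cast; ring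
      _ ≤ c₁ * g i := by gcongr; exact (h₂ i hi).1
      _ ≤ f i := (h₁ i hi).1
  · calc f i ≤ C₁ * g i := (h₁ i hi).2
      _ ≤ C₁ * (C₂ * k i) := by gcongr; exact (h₂ i hi).2
      _ = ((C₁ * C₂ : ℝ≥0) : ℝ≥0∞) * k i := by push_cast; ring

lemma mul (hfg : ComparableOn s f g) (hfg' : ComparableOn s f' g') :
    ComparableOn s (fun i => f i * f' i) (fun i => g i * g' i) := by
  obtain ⟨c₁, C₁, hc₁, hcC₁, h₁⟩ := hfg
  obtain ⟨c₂, C₂, hc₂, hcC₂, h₂⟩ := hfg'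
  refine ⟨c₁ * c₂, C₁ * C₂, mul_pos hc₁ hc₂, mul_le_mul' hcC₁ hcC₂, fun i hi => ⟨?_, ?_⟩⟩
  · calc ((c₁ * c₂ : ℝ≥0) : ℝ≥0∞) * (g i * g' i) = (c₁ * g i) * (c₂ * g' i) := by push_cast; ring
      _ ≤ f i * f' i := mul_le_mul' (h₁ i hi).1 (h₂ i hi).1
  · calc f i * f' i ≤ (C₁ * g i) * (C₂ * g' i) := mul_le_mul' (h₁ i hi).2 (h₂ i hi).2
      _ = ((C₁ * C₂ : ℝ≥0) : ℝ≥0∞) * (g i * g' i) := by push_cast; ring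

lemma comp {t : Set κ} {f g : κ → ℝ≥0∞} (h : ComparableOn t f g) {e : ι → κ} (he : MapsTo e s t) :
    ComparableOn s (f ∘ e) (g ∘ e) := by
  obtain ⟨c, C, hc, hcC, hfg⟩ := h
  exact ⟨c, C, hc, hcC, fun i hi => hfg (e i) (he hi)⟩

lemma setLIntegral {α : Type*} [MeasurableSpace α] {μ : Measure α} {t : Set α} {f g : α → ℝ≥0∞}
    (h : ComparableOn t f g) {S : ι → Set α} (hS : ∀ i ∈ s, MeasurableSet (S i) ∧ S i ⊆ t) :
    ComparableOn s (fun i => ∫⁻ x in S i, f x ∂μ) (fun i => ∫⁻ x in S i, g x ∂μ) := by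
  obtain ⟨c, C, hc, hcC, hfg⟩ := h
  refine ⟨c, C, hc, hcC, fun i hi => ⟨?_, ?_⟩⟩
  · rw [← lintegral_const_mul' _ _ ENNReal.coe_ne_top]
    exact setLIntegral_mono' (hS i hi).1 fun x hx => (hfg x ((hS i hi).2 hx)).1
  · rw [← lintegral_const_mul' _ _ ENNReal.coe_ne_top]
    exact setLIntegral_mono' (hS i hi).1 fun x hx => (hfg x ((hS i hi).2 hx)).2

end ComparableOn

section OfReal

variable {ι : Type*} {s : Set ι}

lemma comparableOn_ofReal {x y : ι → ℝ} {m M : ℝ} (hm : 0 < m) (hM : 0 ≤ M)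
    (h : ∀ i ∈ s, x i ∈ Icc (m * y i) (M * y i)) :
    ComparableOn s (fun i => ENNReal.ofReal (x i)) (fun i => ENNReal.ofReal (y i)) :=
  .of_ofReal_mul_le (C := M) hm fun i hi => by
    rw [← ENNReal.ofReal_mul hm.le, ← ENNReal.ofReal_mul hM]
    exact ⟨ENNReal.ofReal_le_ofReal (h i hi).1, ENNReal.ofReal_le_ofReal (h i hi).2⟩

lemma ComparableOn.ofReal_mul {x₁ y₁ x₂ y₂ : ι → ℝ}
    (h₁ : ComparableOn s (fun i => ENNReal.ofReal (x₁ i)) (fun i => ENNReal.ofReal (y₁ i)))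
    (h₂ : ComparableOn s (fun i => ENNReal.ofReal (x₂ i)) (fun i => ENNReal.ofReal (y₂ i)))
    (hx₁ : ∀ i ∈ s, 0 ≤ x₁ i) (hy₁ : ∀ i ∈ s, 0 ≤ y₁ i) :
    ComparableOn s (fun i => ENNReal.ofReal (x₁ i * x₂ i))
      (fun i => ENNReal.ofReal (y₁ i * y₂ i)) :=
  (h₁.mul h₂).congr (fun i hi => (ENNReal.ofReal_mul (hx₁ i hi)).symm)
    (fun i hi => (ENNReal.ofReal_mul (hy₁ i hi)).symm)

lemma rpow_mem_Icc_of_mem_Icc_mul {x y m M : ℝ} (p : ℝ) (hm : 0 < m) (hy : 0 < y)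
    (hx : x ∈ Icc (m * y) (M * y)) :
    x ^ p ∈ Icc (min (m ^ p) (M ^ p) * y ^ p) (max (m ^ p) (M ^ p) * y ^ p) := by
  obtain ⟨hmx, hxM⟩ := hx
  have hx : 0 < x := (mul_pos hm hy).trans_le hmx
  have hM : 0 < M := pos_of_mul_pos_left (hx.trans_le hxM) hy.le
  rcases le_total 0 p with hp | hp
  · refine ⟨?_, ?_⟩
    · calc min (m ^ p) (M ^ p) * y ^ p ≤ m ^ p * y ^ p := by gcongr; exact min_le_left _ _
        _ = (m * y) ^ p := (mul_rpow hm.le hy.le).symm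
        _ ≤ x ^ p := by gcongr
    · calc x ^ p ≤ (M * y) ^ p := by gcongr
        _ = M ^ p * y ^ p := mul_rpow hM.le hy.le
        _ ≤ max (m ^ p) (M ^ p) * y ^ p := by gcongr; exact le_max_right _ _
  · refine ⟨?_, ?_⟩
    · calc min (m ^ p) (M ^ p) * y ^ p ≤ M ^ p * y ^ p := by gcongr; exact min_le_right _ _
        _ = (M * y) ^ p := (mul_rpow hM.le hy.le).symm
        _ ≤ x ^ p := rpow_le_rpow_of_nonpos hx hxM hp
    · calc x ^ p ≤ (m * y) ^ p := rpow_le_rpow_of_nonpos (by positivity) hmx hp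
        _ = m ^ p * y ^ p := mul_rpow hm.le hy.le
        _ ≤ max (m ^ p) (M ^ p) * y ^ p := by gcongr; exact le_max_left _ _

lemma comparableOn_ofReal_rpow {x y : ι → ℝ} {m M : ℝ} (p : ℝ)
    (hm : 0 < m) (hM : 0 < M) (hy : ∀ i ∈ s, 0 < y i)
    (h : ∀ i ∈ s, x i ∈ Icc (m * y i) (M * y i)) :
    ComparableOn s (fun i => ENNReal.ofReal (x i ^ p)) (fun i => ENNReal.ofReal (y i ^ p)) :=
  comparableOn_ofReal (lt_min (rpow_pos_of_pos hm p) (rpow_pos_of_pos hM p))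
    (le_max_of_le_left (rpow_pos_of_pos hm p).le)
    fun i hi => rpow_mem_Icc_of_mem_Icc_mul p hm (hy i hi) (h i hi)

end OfReal

section Weights

variable {a b L p q : ℝ}

lemma setLIntegral_rpow_le (hp : -1 < p) (ha : 0 ≤ a) (hab : a ≤ b) :
    ∫⁻ ψ in Ioo a b, ENNReal.ofReal (ψ ^ p) ≤
      ENNReal.ofReal (max 1 (p + 1)⁻¹ * ((b - a) * b ^ p)) := by
  rcases hab.eq_or_lt with rfl | hab
  · simp
  have hb : 0 < b := ha.trans_lt hab
  have hbound : 0 ≤ (b - a) * b ^ p := mul_nonneg (by linarith) (rpow_nonneg hb.le p)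
  rw [← ofReal_integral_eq_lintegral_ofReal
    ((intervalIntegral.intervalIntegrable_rpow' hp).1.mono_set Ioo_subset_Ioc_self)
    ((ae_restrict_mem measurableSet_Ioo).mono fun ψ hψ => rpow_nonneg (ha.trans hψ.1.le) p)]
  refine ENNReal.ofReal_le_ofReal ?_
  rcases le_total p 0 with hp0 | hp0
  · -- For `p ≤ 0`, `b ^ (p+1) - a ^ (p+1) = (b - a) b ^ p + a (b ^ p - a ^ p) ≤ (b - a) b ^ p`.
    have hdiff : b ^ (p + 1) - a ^ (p + 1) ≤ (b - a) * b ^ p := by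
      rw [rpow_add_one hb.ne']
      rcases ha.eq_or_lt with rfl | ha
      · rw [zero_rpow (by linarith)]; linarith
      · rw [rpow_add_one ha.ne']
        nlinarith [rpow_le_rpow_of_nonpos ha hab.le hp0]
    calc ∫ ψ in Ioo a b, ψ ^ p = (b ^ (p + 1) - a ^ (p + 1)) / (p + 1) := by
          rw [← integral_Ioc_eq_integral_Ioo, ← intervalIntegral.integral_of_le hab.le,
            integral_rpow (Or.inl hp)]
      _ ≤ (p + 1)⁻¹ * ((b - a) * b ^ p) := by
          rw [div_eq_inv_mul]; gcongr; exact inv_nonneg.2 (by linarith)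
      _ ≤ _ := by gcongr; exact le_max_right _ _
  · calc ∫ ψ in Ioo a b, ψ ^ p ≤ ∫ _ in Ioo a b, b ^ p := by
          refine setIntegral_mono_on ((intervalIntegral.intervalIntegrable_rpow' hp).1.mono_set
            Ioo_subset_Ioc_self) (integrableOn_const measure_Ioo_lt_top.ne) measurableSet_Ioo ?_
          exact fun ψ hψ => rpow_le_rpow (ha.trans hψ.1.le) hψ.2.le hp0
      _ = (b - a) * b ^ p := by simp [hab.le]
      _ ≤ _ := le_mul_of_one_le_left hbound (le_max_left _ _)

lemma setLIntegral_Ioo_comp_sub_left (f : ℝ → ℝ≥0∞) (L a b : ℝ) :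
    ∫⁻ ψ in Ioo a b, f (L - ψ) = ∫⁻ ψ in Ioo (L - b) (L - a), f ψ := by
  have hpre : (L - ·) ⁻¹' Ioo (L - b) (L - a) = Ioo a b := by
    ext ψ
    simp only [mem_preimage, mem_Ioo, sub_lt_sub_iff_left, and_comm]
  rw [← hpre]
  exact (volume.measurePreserving_sub_left L).setLIntegral_comp_preimage_emb
    (MeasurableEquiv.subLeft L).measurableEmbedding f _

lemma setLIntegral_sub_rpow_le (hq : -1 < q) (hab : a ≤ b) (hbL : b ≤ L) :
    ∫⁻ ψ in Ioo a b, ENNReal.ofReal ((L - ψ) ^ q) ≤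
      ENNReal.ofReal (max 1 (q + 1)⁻¹ * ((b - a) * (L - a) ^ q)) := by
  rw [setLIntegral_Ioo_comp_sub_left (fun ψ => ENNReal.ofReal (ψ ^ q))]
  convert setLIntegral_rpow_le hq (sub_nonneg.2 hbL) (sub_le_sub_left hab L) using 4
  ring


lemma ofReal_le_setLIntegral_rpow_mul_rpow_s1 (ha : 0 ≤ a) (hab : a ≤ b) (hbL : b ≤ L) :
    ENNReal.ofReal (min ((1 / 2 : ℝ) ^ p) 1 * min ((1 / 4 : ℝ) ^ q) 1 / 4 *
        ((b - a) * (b ^ p * (L - a) ^ q))) ≤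
      ∫⁻ ψ in Ioo a b, ENNReal.ofReal (ψ ^ p * (L - ψ) ^ q) := by
  -- On `J`, `ψ ≍ b` and `L - ψ ≍ L - a`, and `J` fills a quarter of `(a, b)`.
  set J := Ioo ((a + b) / 2) ((a + 3 * b) / 4)
  have hb : 0 ≤ b := ha.trans hab
  have hLa : 0 ≤ L - a := by linarith
  have hpoint : ∀ ψ ∈ J, min ((1 / 2 : ℝ) ^ p) 1 * b ^ p * (min ((1 / 4 : ℝ) ^ q) 1 * (L - a) ^ q) ≤
      ψ ^ p * (L - ψ) ^ q := by
    rintro ψ ⟨hψa, hψb⟩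
    have hψ := (rpow_mem_Icc_of_mem_Icc_mul p (by norm_num : (0 : ℝ) < 1 / 2) (by linarith)
      (⟨by linarith, by linarith⟩ : ψ ∈ Icc (1 / 2 * b) (1 * b))).1
    have hLψ := (rpow_mem_Icc_of_mem_Icc_mul q (by norm_num : (0 : ℝ) < 1 / 4) (by linarith)
      (⟨by linarith, by linarith⟩ : L - ψ ∈ Icc (1 / 4 * (L - a)) (1 * (L - a)))).1
    rw [one_rpow] at hψ hLψ
    exact mul_le_mul hψ hLψ (by have := rpow_nonneg hLa q; positivity)
      (rpow_nonneg (by linarith) p)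
  calc ENNReal.ofReal (min ((1 / 2 : ℝ) ^ p) 1 * min ((1 / 4 : ℝ) ^ q) 1 / 4 *
        ((b - a) * (b ^ p * (L - a) ^ q)))
      = ∫⁻ _ in J, ENNReal.ofReal
          (min ((1 / 2 : ℝ) ^ p) 1 * b ^ p * (min ((1 / 4 : ℝ) ^ q) 1 * (L - a) ^ q)) := by
        rw [setLIntegral_const, volume_Ioo, ← ENNReal.ofReal_mul (by
          have := rpow_nonneg hb p; have := rpow_nonneg hLa q; positivity)]
        congr 1; ring
    _ ≤ ∫⁻ ψ in J, ENNReal.ofReal (ψ ^ p * (L - ψ) ^ q) :=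
        setLIntegral_mono' measurableSet_Ioo fun ψ hψ => ENNReal.ofReal_le_ofReal (hpoint ψ hψ)
    _ ≤ ∫⁻ ψ in Ioo a b, ENNReal.ofReal (ψ ^ p * (L - ψ) ^ q) :=
        lintegral_mono_set (Ioo_subset_Ioo (by linarith) (by linarith))

lemma setLIntegral_rpow_mul_rpow_le_s1 (hp : -1 < p) (hq : -1 < q) (ha : 0 ≤ a) (hab : a ≤ b)
    (hbL : b ≤ L) :
    ∫⁻ ψ in Ioo a b, ENNReal.ofReal (ψ ^ p * (L - ψ) ^ q) ≤
      ENNReal.ofReal ((max ((1 / 2 : ℝ) ^ q) 1 * max 1 (p + 1)⁻¹ +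
        max ((1 / 2 : ℝ) ^ p) 1 * max 1 (q + 1)⁻¹) * ((b - a) * (b ^ p * (L - a) ^ q))) := by
  set Kp := max ((1 / 2 : ℝ) ^ p) 1
  set Kq := max ((1 / 2 : ℝ) ^ q) 1
  have hb : 0 ≤ b := ha.trans hab
  have hLa : 0 ≤ L - a := by linarith
  have hKp : 0 ≤ Kp * b ^ p := by have := rpow_nonneg hb p; positivity
  have hKq : 0 ≤ Kq * (L - a) ^ q := by have := rpow_nonneg hLa q; positivity
  -- Left of the midpoint `L - ψ ≍ L - a`, right of it `ψ ≍ b`.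
  have hpoint : ∀ ψ ∈ Ioo a b, ψ ^ p * (L - ψ) ^ q ≤
      Kq * (L - a) ^ q * ψ ^ p + Kp * b ^ p * (L - ψ) ^ q := by
    rintro ψ ⟨hψa, hψb⟩
    have hψp := rpow_nonneg (ha.trans hψa.le) p
    have hψq := rpow_nonneg (by linarith : 0 ≤ L - ψ) q
    rcases le_total ψ ((a + b) / 2) with hψ | hψ
    · have hLψ := (rpow_mem_Icc_of_mem_Icc_mul q (by norm_num : (0 : ℝ) < 1 / 2) (by linarith)
        (⟨by linarith, by linarith⟩ : L - ψ ∈ Icc (1 / 2 * (L - a)) (1 * (L - a)))).2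
      rw [one_rpow] at hLψ
      nlinarith [mul_nonneg hKp hψq]
    · have hψ' := (rpow_mem_Icc_of_mem_Icc_mul p (by norm_num : (0 : ℝ) < 1 / 2) (by linarith)
        (⟨by linarith, by linarith⟩ : ψ ∈ Icc (1 / 2 * b) (1 * b))).2
      rw [one_rpow] at hψ'
      nlinarith [mul_nonneg hKq hψp]
  calc ∫⁻ ψ in Ioo a b, ENNReal.ofReal (ψ ^ p * (L - ψ) ^ q)
      ≤ ∫⁻ ψ in Ioo a b, ENNReal.ofReal (Kq * (L - a) ^ q) * ENNReal.ofReal (ψ ^ p) +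
          ENNReal.ofReal (Kp * b ^ p) * ENNReal.ofReal ((L - ψ) ^ q) := by
        refine setLIntegral_mono' measurableSet_Ioo fun ψ hψ => ?_
        rw [← ENNReal.ofReal_mul hKq, ← ENNReal.ofReal_mul hKp, ← ENNReal.ofReal_add
          (mul_nonneg hKq (rpow_nonneg (ha.trans hψ.1.le) p))
          (mul_nonneg hKp (rpow_nonneg (by linarith [hψ.2]) q))]
        exact ENNReal.ofReal_le_ofReal (hpoint ψ hψ)
    _ = ENNReal.ofReal (Kq * (L - a) ^ q) * (∫⁻ ψ in Ioo a b, ENNReal.ofReal (ψ ^ p)) +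
          ENNReal.ofReal (Kp * b ^ p) * ∫⁻ ψ in Ioo a b, ENNReal.ofReal ((L - ψ) ^ q) := by
        rw [lintegral_add_left (by fun_prop), lintegral_const_mul' _ _ ENNReal.ofReal_ne_top,
          lintegral_const_mul' _ _ ENNReal.ofReal_ne_top]
    _ ≤ ENNReal.ofReal (Kq * (L - a) ^ q) *
            ENNReal.ofReal (max 1 (p + 1)⁻¹ * ((b - a) * b ^ p)) +
          ENNReal.ofReal (Kp * b ^ p) *
            ENNReal.ofReal (max 1 (q + 1)⁻¹ * ((b - a) * (L - a) ^ q)) := by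
        gcongr
        exacts [setLIntegral_rpow_le hp ha hab, setLIntegral_sub_rpow_le hq hab hbL]
    _ = _ := by
        rw [← ENNReal.ofReal_mul hKq, ← ENNReal.ofReal_mul hKp, ← ENNReal.ofReal_add
          (mul_nonneg hKq (mul_nonneg (le_max_of_le_left zero_le_one)
            (mul_nonneg (by linarith) (rpow_nonneg hb p))))
          (mul_nonneg hKp (mul_nonneg (le_max_of_le_left zero_le_one)
            (mul_nonneg (by linarith) (rpow_nonneg hLa q))))]
        congr 1; ring

theorem comparableOn_setLIntegral_rpow_mul_rpow (L : ℝ) (hp : -1 < p) (hq : -1 < q) :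
    ComparableOn {x : ℝ × ℝ | 0 ≤ x.1 ∧ x.1 ≤ x.2 ∧ x.2 ≤ L}
      (fun x => ∫⁻ ψ in Ioo x.1 x.2, ENNReal.ofReal (ψ ^ p * (L - ψ) ^ q))
      (fun x => ENNReal.ofReal ((x.2 - x.1) * (x.2 ^ p * (L - x.1) ^ q))) :=
  .of_ofReal_mul_le (c := min ((1 / 2 : ℝ) ^ p) 1 * min ((1 / 4 : ℝ) ^ q) 1 / 4)
    (C := max ((1 / 2 : ℝ) ^ q) 1 * max 1 (p + 1)⁻¹ + max ((1 / 2 : ℝ) ^ p) 1 * max 1 (q + 1)⁻¹)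
    (by positivity) fun _ ⟨ha, hab, hbL⟩ => by
      rw [← ENNReal.ofReal_mul (by positivity), ← ENNReal.ofReal_mul (by positivity)]
      exact ⟨ofReal_le_setLIntegral_rpow_mul_rpow_s1 ha hab hbL,
        setLIntegral_rpow_mul_rpow_le_s1 hp hq ha hab hbL⟩

end Weights

lemma sin_half_mem_Icc {x : ℝ} (hx₀ : 0 ≤ x) (hxπ : x ≤ π) :
    sin (x / 2) ∈ Icc (1 / π * x) (1 / 2 * x) := by
  constructor
  · calc 1 / π * x = 2 / π * (x / 2) := by ring
      _ ≤ sin (x / 2) := mul_le_sin (by linarith) (by linarith)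
  · linarith [sin_le (by linarith : 0 ≤ x / 2)]

lemma comparableOn_sin_half_rpow_mul_cos_half_rpow (p q : ℝ) :
    ComparableOn (Ioo 0 π) (fun ψ => ENNReal.ofReal (sin (ψ / 2) ^ p * cos (ψ / 2) ^ q))
      (fun ψ => ENNReal.ofReal (ψ ^ p * (π - ψ) ^ q)) := by
  have hcos : ∀ ψ, cos (ψ / 2) = sin ((π - ψ) / 2) := fun ψ => by
    rw [← sin_pi_div_two_sub]; ring_nf
  refine ComparableOn.ofReal_mul (comparableOn_ofReal_rpow p (by positivity) (by norm_num)
      (fun ψ hψ => hψ.1) fun ψ hψ => sin_half_mem_Icc hψ.1.le hψ.2.le) ?_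
    (fun ψ hψ => rpow_nonneg (sin_nonneg_of_nonneg_of_le_pi (by linarith [hψ.1])
      (by linarith [hψ.2, pi_pos])) p)
    (fun ψ hψ => rpow_nonneg hψ.1.le p)
  simp_rw [hcos]
  exact comparableOn_ofReal_rpow q (by positivity) (by norm_num) (fun ψ hψ => sub_pos.2 hψ.2)
    fun ψ hψ => sin_half_mem_Icc (by linarith [hψ.2]) (by linarith [hψ.1])

lemma jacobiMeasure_jacobiBall (α β θ r : ℝ) :
    jacobiMeasure α β (jacobiBall θ r) =
      ∫⁻ ψ in Ioo (max (θ - r) 0) (min (θ + r) π),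
        ENNReal.ofReal (sin (ψ / 2) ^ (2 * α + 1) * cos (ψ / 2) ^ (2 * β + 1)) := by
  have hmeas : MeasurableSet (jacobiBall θ r) := measurableSet_Ioo.inter measurableSet_Ioo
  rw [jacobiMeasure, withDensity_apply _ hmeas, Measure.restrict_restrict hmeas, jacobiBall,
    inter_assoc, inter_self, Ioo_inter_Ioo]

lemma ball_endpoints_mem_Icc {L θ φ : ℝ} (hθ : θ ∈ Ioo 0 L) (hφ : φ ∈ Ioo 0 L) :
    min (θ + |θ - φ|) L - max (θ - |θ - φ|) 0 ∈ Icc (1 * |θ - φ|) (2 * |θ - φ|) ∧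
      min (θ + |θ - φ|) L ∈ Icc (1 / 2 * (θ + φ)) (2 * (θ + φ)) ∧
      L - max (θ - |θ - φ|) 0 ∈ Icc (1 / 2 * (2 * L - θ - φ)) (2 * (2 * L - θ - φ)) := by
  obtain ⟨hθ₀, hθL⟩ := hθ
  obtain ⟨hφ₀, hφL⟩ := hφ
  rcases le_total θ φ with h | h
  · rw [abs_of_nonpos (by linarith)]
    refine ⟨⟨?_, ?_⟩, ⟨?_, ?_⟩, ?_, ?_⟩ <;> simp only [max_def, min_def] <;> split_ifs <;> linarith
  · rw [abs_of_nonneg (by linarith)]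
    refine ⟨⟨?_, ?_⟩, ⟨?_, ?_⟩, ?_, ?_⟩ <;> simp only [max_def, min_def] <;> split_ifs <;> linarith

theorem comparableOn_jacobiMeasure_jacobiBall {α β : ℝ} (hα : -1 < α) (hβ : -1 < β) :
    ComparableOn (Ioo 0 π ×ˢ Ioo 0 π) (fun x => jacobiMeasure α β (jacobiBall x.1 |x.1 - x.2|))
      (fun x => ENNReal.ofReal (|x.1 - x.2| *
        ((x.1 + x.2) ^ (2 * α + 1) * (2 * π - x.1 - x.2) ^ (2 * β + 1)))) := by
  set s := Ioo 0 π ×ˢ Ioo 0 π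
  set e : ℝ × ℝ → ℝ × ℝ := fun x => (max (x.1 - |x.1 - x.2|) 0, min (x.1 + |x.1 - x.2|) π)
  have hends := fun x (hx : x ∈ s) => ball_endpoints_mem_Icc hx.1 hx.2
  have hdensity :=
    (comparableOn_sin_half_rpow_mul_cos_half_rpow (2 * α + 1) (2 * β + 1)).setLIntegral (s := s) (μ := volume) (S := fun x => Ioo (e x).1 (e x).2) fun x _ =>
      ⟨measurableSet_Ioo, Ioo_subset_Ioo (le_max_right _ _) (min_le_right _ _)⟩
  have hweight := (comparableOn_setLIntegral_rpow_mul_rpow π (p := 2 * α + 1) (q := 2 * β + 1)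
    (by linarith) (by linarith)).comp (s := s) (e := e) fun x hx =>
      ⟨le_max_right _ _, by linarith [(hends x hx).1.1, abs_nonneg (x.1 - x.2)], min_le_right _ _⟩
  simp_rw [jacobiMeasure_jacobiBall]
  refine hdensity.trans (hweight.trans ?_)
  have hb : ∀ x ∈ s, 0 < (e x).2 := fun x hx =>
    lt_min (by linarith [hx.1.1, abs_nonneg (x.1 - x.2)]) pi_pos
  exact (comparableOn_ofReal one_pos zero_le_two fun x hx => (hends x hx).1).ofReal_mul
    ((comparableOn_ofReal_rpow _ (by norm_num) two_pos (fun x hx => add_pos hx.1.1 hx.2.1)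
      fun x hx => (hends x hx).2.1).ofReal_mul
      (comparableOn_ofReal_rpow _ (by norm_num) two_pos (fun x hx => by linarith [hx.1.2, hx.2.2])
        fun x hx => (hends x hx).2.2)
      (fun x hx => rpow_nonneg (hb x hx).le _)
      (fun x hx => rpow_nonneg (add_pos hx.1.1 hx.2.1).le _))
    (fun x hx => by linarith [(hends x hx).1.1, abs_nonneg (x.1 - x.2)])
    (fun x _ => abs_nonneg _)

/-- comparison of ball measures for shifted parameters. -/
theorem jacobi_ball_measure_shift_comparison (α β γ₁ γ₂ : ℝ) (hα : -1 < α) (hβ : -1 < β)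
    (hγ₁ : 0 ≤ γ₁) (hγ₂ : 0 ≤ γ₂) :
    ∃ c C : ℝ, 0 < c ∧ c ≤ C ∧
      ∀ θ ∈ Ioo (0 : ℝ) π, ∀ φ ∈ Ioo (0 : ℝ) π,
        ENNReal.ofReal (c * ((θ + φ) ^ (2 * γ₁) * (2 * π - θ - φ) ^ (2 * γ₂))) *
            jacobiMeasure α β (jacobiBall θ |θ - φ|)
          ≤ jacobiMeasure (α + γ₁) (β + γ₂) (jacobiBall θ |θ - φ|) ∧
        jacobiMeasure (α + γ₁) (β + γ₂) (jacobiBall θ |θ - φ|)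
          ≤ ENNReal.ofReal (C * ((θ + φ) ^ (2 * γ₁) * (2 * π - θ - φ) ^ (2 * γ₂))) *
            jacobiMeasure α β (jacobiBall θ |θ - φ|) := by
  set F : ℝ × ℝ → ℝ := fun x => (x.1 + x.2) ^ (2 * γ₁) * (2 * π - x.1 - x.2) ^ (2 * γ₂)
  have hshift : EqOn
      (fun x => ENNReal.ofReal (|x.1 - x.2| * ((x.1 + x.2) ^ (2 * (α + γ₁) + 1) *
        (2 * π - x.1 - x.2) ^ (2 * (β + γ₂) + 1))))
      (fun x => ENNReal.ofReal (F x) * ENNReal.ofReal (|x.1 - x.2| * ((x.1 + x.2) ^ (2 * α + 1) *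
        (2 * π - x.1 - x.2) ^ (2 * β + 1)))) (Ioo 0 π ×ˢ Ioo 0 π) := by
    rintro x ⟨⟨hθ₀, hθπ⟩, hφ₀, hφπ⟩
    have h₁ : 0 < x.1 + x.2 := by linarith
    have h₂ : 0 < 2 * π - x.1 - x.2 := by linarith
    dsimp only [F]
    rw [← ENNReal.ofReal_mul (by positivity), show 2 * (α + γ₁) + 1 = 2 * γ₁ + (2 * α + 1) by ring,
      show 2 * (β + γ₂) + 1 = 2 * γ₂ + (2 * β + 1) by ring, rpow_add h₁, rpow_add h₂]
    congr 1
    ring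
  obtain ⟨c, C, hc, hcC, h⟩ :=
    ((comparableOn_jacobiMeasure_jacobiBall (by linarith : -1 < α + γ₁) (by linarith)).congr
      (eqOn_refl _ _) hshift).trans
      ((ComparableOn.refl _ fun x => ENNReal.ofReal (F x)).mul
        (comparableOn_jacobiMeasure_jacobiBall hα hβ).symm)
  refine ⟨c, C, hc, hcC, fun θ hθ φ hφ => ?_⟩
  simp only [ENNReal.ofReal_mul (NNReal.coe_nonneg _), ENNReal.ofReal_coe_nnreal, mul_assoc]
  exact h (θ, φ) ⟨hθ, hφ⟩
end

section
/- Let α ≥ -1/2 and κ₁ ≥ 0. There exists a constant C depending only on α and κ₁ such that for every nonnegative nondecreasing function φ on [-1,1] one has ∫_{[-1,1]} φ(u) dΠ_{α+κ₁}(u) ≤ C ∫_{[-1,1]} φ(u) dΠ_α(u). -/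
open MeasureTheory Real Set

/-! For `α > -1/2` both measures have densities, and `(1 - u²)^(α + κ₁ - 1/2) ≤ (1 - u²)^(α - 1/2)`
on `(-1, 1)`, so `Π_{α+κ₁}` is dominated by a multiple of `Π_α` and monotonicity plays no role.
For `α = -1/2` the measure `Π_α` charges the point `1`, and `φ(1)` bounds `φ` on `[-1, 1]`, which
carries the finite measure `Π_{α+κ₁}`. -/

open scoped ENNReal

lemma one_sub_sq_rpow_le_add {r u : ℝ} (hu : u ∈ Icc (-1 : ℝ) 1) :
    (1 - u ^ 2) ^ r ≤ (1 - u) ^ r + (1 + u) ^ r := by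
  wlog hu₀ : 0 ≤ u generalizing u
  · have := this (u := -u) ⟨by linarith [hu.2], by linarith [hu.1]⟩ (by linarith)
    rwa [neg_sq, sub_neg_eq_add, ← sub_eq_add_neg, add_comm] at this
  obtain ⟨-, hu₁⟩ := hu
  have hsub : 0 ≤ 1 - u := by linarith
  have hsq : 0 ≤ 1 - u ^ 2 := by nlinarith
  rcases le_or_gt 0 r with hr | hr
  · have : (1 - u ^ 2) ^ r ≤ (1 + u) ^ r := Real.rpow_le_rpow hsq (by nlinarith) hr
    linarith [Real.rpow_nonneg hsub r]
  rcases hsub.eq_or_lt with hu₁ | hsub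
  · have : (1 - u ^ 2) ^ r = 0 := by
      rw [show u = 1 by linarith]; norm_num [Real.zero_rpow hr.ne]
    rw [this]; positivity
  · have : (1 - u ^ 2) ^ r ≤ (1 - u) ^ r := Real.rpow_le_rpow_of_nonpos hsub (by nlinarith) hr.le
    linarith [Real.rpow_nonneg (by linarith : (0 : ℝ) ≤ 1 + u) r]

lemma integrableOn_one_sub_sq_rpow {r : ℝ} (hr : -1 < r) :
    IntegrableOn (fun u : ℝ => (1 - u ^ 2) ^ r) (Icc (-1) 1) := by
  have hrpow := intervalIntegral.intervalIntegrable_rpow' hr (a := 0) (b := 2)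
  have hsub : IntervalIntegrable (fun u : ℝ => (1 - u) ^ r) volume (-1) 1 := by
    have h := (hrpow.comp_sub_left 1).symm
    norm_num at h
    exact h
  have hadd : IntervalIntegrable (fun u : ℝ => (1 + u) ^ r) volume (-1) 1 := by
    have h := hrpow.comp_add_left 1
    norm_num at h
    exact h
  refine Integrable.mono' ((intervalIntegrable_iff_integrableOn_Icc_of_le (by norm_num)).mp
    (hsub.add hadd)) (by fun_prop : Measurable fun u : ℝ => (1 - u ^ 2) ^ r).aestronglyMeasurable ?_
  filter_upwards [ae_restrict_mem measurableSet_Icc] with u hu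
  rw [Real.norm_of_nonneg (Real.rpow_nonneg (by nlinarith [hu.1, hu.2]) r)]
  exact one_sub_sq_rpow_le_add hu

noncomputable def piMeasureConst (α : ℝ) : ℝ :=
  Real.Gamma (α + 1) / (Real.sqrt π * Real.Gamma (α + 1 / 2))

lemma piMeasureConst_pos {α : ℝ} (hα : -(1 / 2) < α) : 0 < piMeasureConst α :=
  div_pos (Real.Gamma_pos_of_pos (by linarith))
    (mul_pos (Real.sqrt_pos.mpr Real.pi_pos) (Real.Gamma_pos_of_pos (by linarith)))

lemma piMeasure_of_ne {α : ℝ} (hα : α ≠ -(1 / 2)) :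
    PiMeasure α = (volume.restrict (Icc (-1) 1)).withDensity
      (fun u => ENNReal.ofReal (piMeasureConst α * (1 - u ^ 2) ^ (α - 1 / 2))) := by
  rw [PiMeasure, if_neg hα, piMeasureConst]

lemma lintegral_piMeasure_neg_half (f : ℝ → ℝ≥0∞) :
    ∫⁻ u, f u ∂PiMeasure (-(1 / 2)) = 2⁻¹ * (f (-1) + f 1) := by
  rw [PiMeasure, if_pos rfl, lintegral_smul_measure, lintegral_add_measure, lintegral_dirac,
    lintegral_dirac, smul_eq_mul]

lemma isFiniteMeasure_piMeasure {α : ℝ} (hα : -(1 / 2) ≤ α) : IsFiniteMeasure (PiMeasure α) := by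
  rcases hα.eq_or_lt with rfl | hα
  · rw [PiMeasure, if_pos rfl]
    constructor
    simp
  · rw [piMeasure_of_ne hα.ne']
    exact isFiniteMeasure_withDensity_ofReal
      ((integrableOn_one_sub_sq_rpow (by linarith)).const_mul _).hasFiniteIntegral

lemma ae_piMeasure_mem_Icc (α : ℝ) : ∀ᵐ u ∂PiMeasure α, u ∈ Icc (-1 : ℝ) 1 := by
  by_cases hα : α = -(1 / 2)
  · rw [PiMeasure, if_pos hα]
    simp
  · rw [piMeasure_of_ne hα]
    exact (withDensity_absolutelyContinuous _ _).ae_le (ae_restrict_mem measurableSet_Icc)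

lemma piMeasure_add_le_smul {α κ : ℝ} (hα : -(1 / 2) < α) (hκ : 0 ≤ κ) :
    PiMeasure (α + κ) ≤
      ENNReal.ofReal (piMeasureConst (α + κ) / piMeasureConst α) • PiMeasure α := by
  have hc := piMeasureConst_pos hα
  have hc' : 0 < piMeasureConst (α + κ) := piMeasureConst_pos (by linarith)
  rw [piMeasure_of_ne hα.ne', piMeasure_of_ne (by linarith),
    ← withDensity_smul' _ _ ENNReal.ofReal_ne_top]
  refine withDensity_mono ?_
  -- at `u = ±1` the densities may read `0 ^ 0 = 1` against `0 ^ (α - 1/2) = 0`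
  have hIoo : ∀ᵐ u ∂volume.restrict (Icc (-1 : ℝ) 1), u ∈ Ioo (-1 : ℝ) 1 := by
    rw [Measure.restrict_congr_set Ioo_ae_eq_Icc.symm]
    exact ae_restrict_mem measurableSet_Ioo
  filter_upwards [hIoo] with u ⟨hu₁, hu₂⟩
  have hpow : (1 - u ^ 2) ^ (α + κ - 1 / 2) ≤ (1 - u ^ 2) ^ (α - 1 / 2) :=
    Real.rpow_le_rpow_of_exponent_ge (by nlinarith) (by nlinarith) (by linarith)
  rw [Pi.smul_apply, smul_eq_mul, ← ENNReal.ofReal_mul (by positivity), ← mul_assoc,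
    div_mul_cancel₀ _ hc.ne']
  exact ENNReal.ofReal_le_ofReal (mul_le_mul_of_nonneg_left hpow hc'.le)

lemma lintegral_ofReal_le_of_monotoneOn {μ : Measure ℝ} {φ : ℝ → ℝ} {a b : ℝ} (hab : a ≤ b)
    (hμ : ∀ᵐ u ∂μ, u ∈ Icc a b) (hφ : MonotoneOn φ (Icc a b)) :
    ∫⁻ u, ENNReal.ofReal (φ u) ∂μ ≤ μ univ * ENNReal.ofReal (φ b) :=
  calc ∫⁻ u, ENNReal.ofReal (φ u) ∂μ ≤ ∫⁻ _, ENNReal.ofReal (φ b) ∂μ :=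
        lintegral_mono_ae <| hμ.mono fun _ hu ↦
          ENNReal.ofReal_le_ofReal (hφ hu (right_mem_Icc.2 hab) hu.2)
    _ = μ univ * ENNReal.ofReal (φ b) := by rw [lintegral_const, mul_comm]

lemma lintegral_piMeasure_le_lintegral_piMeasure_neg_half (α : ℝ) {φ : ℝ → ℝ}
    (hφ : MonotoneOn φ (Icc (-1) 1)) :
    ∫⁻ u, ENNReal.ofReal (φ u) ∂PiMeasure α ≤
      2 * PiMeasure α univ * ∫⁻ u, ENNReal.ofReal (φ u) ∂PiMeasure (-(1 / 2)) :=
  calc ∫⁻ u, ENNReal.ofReal (φ u) ∂PiMeasure α ≤ PiMeasure α univ * ENNReal.ofReal (φ 1) :=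
        lintegral_ofReal_le_of_monotoneOn (by norm_num) (ae_piMeasure_mem_Icc α) hφ
    _ ≤ PiMeasure α univ * (ENNReal.ofReal (φ (-1)) + ENNReal.ofReal (φ 1)) := by
        gcongr; exact le_add_self
    _ = 2 * PiMeasure α univ * ∫⁻ u, ENNReal.ofReal (φ u) ∂PiMeasure (-(1 / 2)) := by
        rw [lintegral_piMeasure_neg_half, mul_comm 2, mul_assoc, ← mul_assoc 2,
          ENNReal.mul_inv_cancel two_ne_zero ENNReal.ofNat_ne_top, one_mul]

lemma ENNReal.exists_pos_le_ofReal {x : ℝ≥0∞} (hx : x ≠ ∞) :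
    ∃ C : ℝ, 0 < C ∧ x ≤ ENNReal.ofReal C :=
  ⟨x.toReal + 1, by positivity, by
    rw [← ENNReal.ofReal_toReal hx]; exact ENNReal.ofReal_le_ofReal (by simp)⟩

/-- integrals of nonnegative nondecreasing functions against `Π_{α+κ₁}`
are controlled by integrals against `Π_α`. -/
theorem PiMeasure_monotone_integral_comparison (α κ₁ : ℝ)
    (hα : -(1 / 2) ≤ α) (hκ₁ : 0 ≤ κ₁) :
    ∃ C : ℝ, 0 < C ∧
      ∀ φ : ℝ → ℝ, (∀ u ∈ Icc (-1 : ℝ) 1, 0 ≤ φ u) → MonotoneOn φ (Icc (-1 : ℝ) 1) →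
        (∫⁻ u, ENNReal.ofReal (φ u) ∂(PiMeasure (α + κ₁)))
          ≤ ENNReal.ofReal C * ∫⁻ u, ENNReal.ofReal (φ u) ∂(PiMeasure α) := by
  obtain ⟨c, hc, hcomp⟩ : ∃ c : ℝ≥0∞, c ≠ ∞ ∧ ∀ φ : ℝ → ℝ, MonotoneOn φ (Icc (-1 : ℝ) 1) →
      ∫⁻ u, ENNReal.ofReal (φ u) ∂PiMeasure (α + κ₁) ≤
        c * ∫⁻ u, ENNReal.ofReal (φ u) ∂PiMeasure α := by
    rcases hα.eq_or_lt with rfl | hα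
    · have := isFiniteMeasure_piMeasure (α := -(1 / 2) + κ₁) (by linarith)
      exact ⟨_, ENNReal.mul_ne_top ENNReal.ofNat_ne_top (measure_ne_top _ _),
        fun φ hφ ↦ lintegral_piMeasure_le_lintegral_piMeasure_neg_half _ hφ⟩
    · exact ⟨_, ENNReal.ofReal_ne_top, fun φ _ ↦
        (lintegral_mono' (piMeasure_add_le_smul hα hκ₁) le_rfl).trans_eq
          (lintegral_smul_measure _ _)⟩
  obtain ⟨C, hC, hcC⟩ := ENNReal.exists_pos_le_ofReal hc
  exact ⟨C, hC, fun φ _ hφ ↦ (hcomp φ hφ).trans (mul_le_mul_left hcC _)⟩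
end

section
/- There exist constants 0 < c ≤ C (absolute, independent of all parameters) such that: for all θ, θ̃, φ ∈ (0,π) with |θ-φ| > 2|θ-θ̃| and all u, v ∈ [-1,1], c·q(θ,φ,u,v) ≤ q(θ̃,φ,u,v) ≤ C·q(θ,φ,u,v); and similarly, for all θ, φ, φ̃ ∈ (0,π) with |θ-φ| > 2|φ-φ̃| and all u, v ∈ [-1,1], c·q(θ,φ,u,v) ≤ q(θ,φ̃,u,v) ≤ C·q(θ,φ,u,v). -/
open MeasureTheory Real Set

/-- `x² ≤ (π²/2)(1 - cos x)` for `|x| ≤ π`. -/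
lemma sq_le_one_sub_cos {x : ℝ} (hx : |x| ≤ π) :
    x ^ 2 ≤ π ^ 2 / 2 * (1 - Real.cos x) := by
  have h := Real.cos_le_one_sub_mul_cos_sq hx
  have hπ := Real.pi_pos
  have h2 : 2 / π ^ 2 * x ^ 2 ≤ 1 - Real.cos x := by linarith
  calc x ^ 2 = π ^ 2 / 2 * (2 / π ^ 2 * x ^ 2) := by field_simp
    _ ≤ π ^ 2 / 2 * (1 - Real.cos x) := by
        apply mul_le_mul_of_nonneg_left h2; positivity

/-- Core lemma: `sin b · |a-b| ≤ 13 (sin a sin b + 1 - cos (a-b))` for `a,b ∈ [0,π/2]`. -/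
lemma core {a b : ℝ} (ha0 : 0 ≤ a) (ha : a ≤ π / 2) (hb0 : 0 ≤ b) (hb : b ≤ π / 2) :
    Real.sin b * |a - b| ≤ 13 * (Real.sin a * Real.sin b + (1 - Real.cos (a - b))) := by
  have hsa : 0 ≤ Real.sin a := Real.sin_nonneg_of_nonneg_of_le_pi ha0 (by linarith [Real.pi_pos])
  have hsb : 0 ≤ Real.sin b := Real.sin_nonneg_of_nonneg_of_le_pi hb0 (by linarith [Real.pi_pos])
  have hD0 : 0 ≤ 1 - Real.cos (a - b) := by linarith [Real.cos_le_one (a - b)]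
  rcases le_or_gt |a - b| (Real.sin a) with h | h
  · have h1 : Real.sin b * |a - b| ≤ Real.sin b * Real.sin a :=
      mul_le_mul_of_nonneg_left h hsb
    nlinarith
  · -- |a-b| > sin a ≥ (2/π) a
    have hja : 2 / π * a ≤ Real.sin a := Real.mul_le_sin ha0 ha
    have hπ := Real.pi_pos
    have hπ' : π < 3.15 := Real.pi_lt_d2
    have ha' : a ≤ π / 2 * |a - b| := by
      have : 2 / π * a < |a - b| := lt_of_le_of_lt hja h
      rw [div_mul_eq_mul_div, div_lt_iff₀ hπ] at this
      nlinarith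
    have hb' : b ≤ (π / 2 + 1) * |a - b| := by
      have : b ≤ a + |a - b| := by
        rcases abs_cases (a - b) with ⟨h1, _⟩ | ⟨h1, _⟩ <;> nlinarith
      linarith
    have hsble : Real.sin b ≤ b := Real.sin_le hb0
    have habs : |a - b| ≤ π := by
      rw [abs_le]; constructor <;> nlinarith
    have hsq : (a - b) ^ 2 ≤ π ^ 2 / 2 * (1 - Real.cos (a - b)) := sq_le_one_sub_cos habs
    have hprod : Real.sin b * |a - b| ≤ (π / 2 + 1) * (a - b) ^ 2 := by
      have h0 : 0 ≤ |a - b| := abs_nonneg _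
      have : Real.sin b * |a - b| ≤ ((π / 2 + 1) * |a - b|) * |a - b| :=
        mul_le_mul_of_nonneg_right (hsble.trans hb') h0
      calc Real.sin b * |a - b| ≤ (π / 2 + 1) * (|a - b| * |a - b|) := by linarith [this]
        _ = (π / 2 + 1) * (a - b) ^ 2 := by rw [← abs_mul, ← sq, abs_sq]
    have c1 : (π / 2 + 1) * (π ^ 2 / 2) ≤ 13 := by nlinarith
    have c2 : (π / 2 + 1) * (a - b) ^ 2 ≤ (π / 2 + 1) * (π ^ 2 / 2 * (1 - Real.cos (a - b))) :=
      mul_le_mul_of_nonneg_left hsq (by positivity)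
    have c3 : (π / 2 + 1) * (π ^ 2 / 2) * (1 - Real.cos (a - b)) ≤ 13 * (1 - Real.cos (a - b)) :=
      mul_le_mul_of_nonneg_right c1 hD0
    nlinarith [mul_nonneg hsa hsb]

/-- `qfun` decomposition. -/
lemma qfun_eq (θ φ u v : ℝ) :
    qfun θ φ u v = (1 - u) * (Real.sin (θ / 2) * Real.sin (φ / 2))
      + (1 - v) * (Real.cos (θ / 2) * Real.cos (φ / 2))
      + (1 - Real.cos (θ / 2 - φ / 2)) := by
  unfold qfun; rw [Real.cos_sub]; ring

lemma qfun_symm (θ φ u v : ℝ) : qfun θ φ u v = qfun φ θ u v := by unfold qfun; ring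

/-- Arithmetic core of the key comparison, with opaque variables. -/
lemma key_arith {A B D A' B' D' u v : ℝ}
    (hA0 : 0 ≤ A) (hB0 : 0 ≤ B) (hD0 : 0 ≤ D) (hD'0 : 0 ≤ D')
    (hAd1 : A' - A ≤ 13 * (A + D)) (hBd1 : B' - B ≤ 13 * (B + D))
    (hD'le : D' ≤ 10 * D)
    (hu1 : -1 ≤ u) (hu2 : u ≤ 1) (hv1 : -1 ≤ v) (hv2 : v ≤ 1) :
    (1 - u) * A' + (1 - v) * B' + D' ≤ 1000 * ((1 - u) * A + (1 - v) * B + D) := by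
  have hu0 : 0 ≤ 1 - u := by linarith
  have hu2' : 1 - u ≤ 2 := by linarith
  have hv0 : 0 ≤ 1 - v := by linarith
  have hv2' : 1 - v ≤ 2 := by linarith
  have e1 : (1 - u) * A' ≤ 14 * ((1 - u) * A) + 26 * D := by
    nlinarith [mul_le_mul_of_nonneg_left hAd1 hu0, mul_le_mul_of_nonneg_right hu2' hD0]
  have e2 : (1 - v) * B' ≤ 14 * ((1 - v) * B) + 26 * D := by
    nlinarith [mul_le_mul_of_nonneg_left hBd1 hv0, mul_le_mul_of_nonneg_right hv2' hD0]
  have huA : 0 ≤ (1 - u) * A := mul_nonneg hu0 hA0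
  have hvB : 0 ≤ (1 - v) * B := mul_nonneg hv0 hB0
  linarith

/-- Lipschitz bounds for sin and cos. -/
lemma sin_lip (x y : ℝ) : |Real.sin x - Real.sin y| ≤ |x - y| := by
  rw [Real.sin_sub_sin]
  calc |2 * Real.sin ((x - y) / 2) * Real.cos ((x + y) / 2)|
      = 2 * |Real.sin ((x - y) / 2)| * |Real.cos ((x + y) / 2)| := by
        rw [abs_mul, abs_mul]; norm_num
    _ ≤ 2 * |(x - y) / 2| * 1 :=
        mul_le_mul (mul_le_mul_of_nonneg_left Real.abs_sin_le_abs (by norm_num))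
          (Real.abs_cos_le_one _) (abs_nonneg _) (by positivity)
    _ = |x - y| := by rw [abs_div, abs_two]; ring

lemma cos_lip (x y : ℝ) : |Real.cos x - Real.cos y| ≤ |x - y| := by
  rw [Real.cos_sub_cos]
  calc |(-2) * Real.sin ((x + y) / 2) * Real.sin ((x - y) / 2)|
      = 2 * |Real.sin ((x + y) / 2)| * |Real.sin ((x - y) / 2)| := by
        rw [abs_mul, abs_mul]; norm_num
    _ ≤ 2 * 1 * |(x - y) / 2| :=
        mul_le_mul (mul_le_mul_of_nonneg_left (Real.abs_sin_le_one _) (by norm_num))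
          Real.abs_sin_le_abs (abs_nonneg _) (by norm_num)
    _ = |x - y| := by rw [abs_div, abs_two]; ring

/-- Key comparison at the level of half-angles. -/
lemma key_half {a a' b : ℝ} (ha0 : 0 ≤ a) (haπ : a ≤ π / 2) (ha'0 : 0 ≤ a')
    (ha'π : a' ≤ π / 2) (hb0 : 0 ≤ b) (hbπ : b ≤ π / 2)
    (hdist : |a - a'| < |a - b|) {u v : ℝ}
    (hu1 : -1 ≤ u) (hu2 : u ≤ 1) (hv1 : -1 ≤ v) (hv2 : v ≤ 1) :
    (1 - u) * (Real.sin a' * Real.sin b) + (1 - v) * (Real.cos a' * Real.cos b)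
        + (1 - Real.cos (a' - b))
      ≤ 1000 * ((1 - u) * (Real.sin a * Real.sin b) + (1 - v) * (Real.cos a * Real.cos b)
        + (1 - Real.cos (a - b))) := by
  have hπ := Real.pi_pos
  have hsa : 0 ≤ Real.sin a := Real.sin_nonneg_of_nonneg_of_le_pi ha0 (by linarith)
  have hsb : 0 ≤ Real.sin b := Real.sin_nonneg_of_nonneg_of_le_pi hb0 (by linarith)
  have hca : 0 ≤ Real.cos a := Real.cos_nonneg_of_mem_Icc ⟨by linarith, haπ⟩
  have hcb : 0 ≤ Real.cos b := Real.cos_nonneg_of_mem_Icc ⟨by linarith, hbπ⟩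
  have hD0 : 0 ≤ 1 - Real.cos (a - b) := by linarith [Real.cos_le_one (a - b)]
  have hD'0 : 0 ≤ 1 - Real.cos (a' - b) := by linarith [Real.cos_le_one (a' - b)]
  apply key_arith (mul_nonneg hsa hsb) (mul_nonneg hca hcb) hD0 hD'0 ?_ ?_ ?_ hu1 hu2 hv1 hv2
  · -- A' - A ≤ 13 (A + D)
    have h2 : (Real.sin a' - Real.sin a) * Real.sin b ≤ |a - b| * Real.sin b := by
      apply mul_le_mul_of_nonneg_right _ hsb
      calc Real.sin a' - Real.sin a ≤ |Real.sin a' - Real.sin a| := le_abs_self _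
        _ ≤ |a' - a| := sin_lip a' a
        _ ≤ |a - b| := by rw [abs_sub_comm]; exact hdist.le
    have h3 := core ha0 haπ hb0 hbπ
    nlinarith
  · -- B' - B ≤ 13 (B + D)
    have h2 : (Real.cos a' - Real.cos a) * Real.cos b ≤ |a - b| * Real.cos b := by
      apply mul_le_mul_of_nonneg_right _ hcb
      calc Real.cos a' - Real.cos a ≤ |Real.cos a' - Real.cos a| := le_abs_self _
        _ ≤ |a' - a| := cos_lip a' a
        _ ≤ |a - b| := by rw [abs_sub_comm]; exact hdist.le
    have h3 := core (a := π / 2 - a) (b := π / 2 - b) (by linarith) (by linarith)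
      (by linarith) (by linarith)
    rw [Real.sin_pi_div_two_sub, Real.sin_pi_div_two_sub,
      show π / 2 - a - (π / 2 - b) = -(a - b) from by ring, Real.cos_neg,
      show |(-(a - b))| = |a - b| from abs_neg _] at h3
    nlinarith
  · -- D' ≤ 10 D
    have habD : |a - b| ≤ π := by rw [abs_le]; constructor <;> nlinarith
    have ha'b : |a' - b| ≤ 2 * |a - b| := by
      have ht : |a' - b| ≤ |a' - a| + |a - b| := abs_sub_le a' a b
      rw [abs_sub_comm a' a] at ht; linarith
    have hsq : (a - b) ^ 2 ≤ π ^ 2 / 2 * (1 - Real.cos (a - b)) := sq_le_one_sub_cos habD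
    have hup : 1 - Real.cos (a' - b) ≤ (a' - b) ^ 2 / 2 := by
      linarith [Real.one_sub_sq_div_two_le_cos (x := a' - b)]
    have hsq2 : (a' - b) ^ 2 ≤ 4 * (a - b) ^ 2 := by
      have h0 : |a' - b| * |a' - b| ≤ (2 * |a - b|) * (2 * |a - b|) :=
        mul_le_mul ha'b ha'b (abs_nonneg _) (by positivity)
      calc (a' - b) ^ 2 = |a' - b| * |a' - b| := by rw [← abs_mul, ← sq, abs_sq]
        _ ≤ (2 * |a - b|) * (2 * |a - b|) := h0
        _ = 4 * (|a - b| * |a - b|) := by ring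
        _ = 4 * (a - b) ^ 2 := by rw [← abs_mul, ← sq, abs_sq]
    have hπ' : π < 3.15 := Real.pi_lt_d2
    have hπsq : π ^ 2 ≤ 10 := by nlinarith
    have h10 : π ^ 2 * (1 - Real.cos (a - b)) ≤ 10 * (1 - Real.cos (a - b)) :=
      mul_le_mul_of_nonneg_right hπsq hD0
    linarith

/-- Key one-sided comparison. -/
lemma qfun_key {θ θ' φ : ℝ} (hθ : θ ∈ Ioo (0 : ℝ) π) (hθ' : θ' ∈ Ioo (0 : ℝ) π)
    (hφ : φ ∈ Ioo (0 : ℝ) π) (h : |θ - θ'| < |θ - φ|)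
    {u v : ℝ} (hu : u ∈ Icc (-1 : ℝ) 1) (hv : v ∈ Icc (-1 : ℝ) 1) :
    qfun θ' φ u v ≤ 1000 * qfun θ φ u v := by
  obtain ⟨hθ1, hθ2⟩ := hθ; obtain ⟨hθ'1, hθ'2⟩ := hθ'; obtain ⟨hφ1, hφ2⟩ := hφ
  obtain ⟨hu1, hu2⟩ := hu; obtain ⟨hv1, hv2⟩ := hv
  have hπ := Real.pi_pos
  have hdist : |θ / 2 - θ' / 2| < |θ / 2 - φ / 2| := by
    rw [show θ / 2 - θ' / 2 = (θ - θ') / 2 from by ring,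
      show θ / 2 - φ / 2 = (θ - φ) / 2 from by ring, abs_div, abs_div, abs_two]
    linarith
  have := key_half (a := θ / 2) (a' := θ' / 2) (b := φ / 2)
    (by positivity) (by linarith) (by positivity) (by linarith)
    (by positivity) (by linarith) hdist hu1 hu2 hv1 hv2
  rw [qfun_eq θ' φ u v, qfun_eq θ φ u v]
  exact this

/-- comparability of `q` under small perturbations of its arguments. -/
theorem qfun_comparable :
    ∃ c C : ℝ, 0 < c ∧ c ≤ C ∧
      (∀ θ ∈ Ioo (0 : ℝ) π, ∀ θ' ∈ Ioo (0 : ℝ) π, ∀ φ ∈ Ioo (0 : ℝ) π,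
        |θ - φ| > 2 * |θ - θ'| →
        ∀ u ∈ Icc (-1 : ℝ) 1, ∀ v ∈ Icc (-1 : ℝ) 1,
          c * qfun θ φ u v ≤ qfun θ' φ u v ∧ qfun θ' φ u v ≤ C * qfun θ φ u v) ∧
      (∀ θ ∈ Ioo (0 : ℝ) π, ∀ φ ∈ Ioo (0 : ℝ) π, ∀ φ' ∈ Ioo (0 : ℝ) π,
        |θ - φ| > 2 * |φ - φ'| →
        ∀ u ∈ Icc (-1 : ℝ) 1, ∀ v ∈ Icc (-1 : ℝ) 1,
          c * qfun θ φ u v ≤ qfun θ φ' u v ∧ qfun θ φ' u v ≤ C * qfun θ φ u v) := by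
  have main : ∀ θ ∈ Ioo (0 : ℝ) π, ∀ θ' ∈ Ioo (0 : ℝ) π, ∀ φ ∈ Ioo (0 : ℝ) π,
      |θ - φ| > 2 * |θ - θ'| →
      ∀ u ∈ Icc (-1 : ℝ) 1, ∀ v ∈ Icc (-1 : ℝ) 1,
        (1 / 1000 : ℝ) * qfun θ φ u v ≤ qfun θ' φ u v ∧
          qfun θ' φ u v ≤ 1000 * qfun θ φ u v := by
    intro θ hθ θ' hθ' φ hφ h u hu v hv
    have h1 : |θ - θ'| < |θ - φ| := by
      have := abs_nonneg (θ - θ'); linarith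
    have h2 : |θ' - θ| < |θ' - φ| := by
      have ht : |θ - φ| ≤ |θ - θ'| + |θ' - φ| := abs_sub_le θ θ' φ
      rw [abs_sub_comm θ' θ]; linarith
    refine ⟨?_, qfun_key hθ hθ' hφ h1 hu hv⟩
    have := qfun_key hθ' hθ hφ h2 hu hv
    linarith
  refine ⟨1 / 1000, 1000, by norm_num, by norm_num, main, ?_⟩
  intro θ hθ φ hφ φ' hφ' h u hu v hv
  rw [qfun_symm θ φ u v, qfun_symm θ φ' u v]
  rw [abs_sub_comm θ φ] at h
  exact main φ hφ φ' hφ' θ hθ h u hu v hv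
end

section
/- There exists an absolute constant C such that for all θ, φ ∈ (0,π) and all u, v ∈ [-1,1] one has |∂_θ q(θ,φ,u,v)| ≤ C √(q(θ,φ,u,v)) and |∂_φ q(θ,φ,u,v)| ≤ C √(q(θ,φ,u,v)), where ∂_θ q(θ,φ,u,v) = -(u/2) cos(θ/2) sin(φ/2) + (v/2) sin(θ/2) cos(φ/2) and ∂_φ q is the analogous derivative in φ. -/
open MeasureTheory Real Set

/-- the partial derivatives of `q` are controlled by `√q`. -/
theorem qfun_deriv_bound :
    ∃ C : ℝ, 0 < C ∧
      ∀ θ ∈ Ioo (0 : ℝ) π, ∀ φ ∈ Ioo (0 : ℝ) π,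
        ∀ u ∈ Icc (-1 : ℝ) 1, ∀ v ∈ Icc (-1 : ℝ) 1,
          |(-(u / 2)) * Real.cos (θ / 2) * Real.sin (φ / 2) +
              (v / 2) * Real.sin (θ / 2) * Real.cos (φ / 2)|
            ≤ C * Real.sqrt (qfun θ φ u v) ∧
          |(-(u / 2)) * Real.sin (θ / 2) * Real.cos (φ / 2) +
              (v / 2) * Real.cos (θ / 2) * Real.sin (φ / 2)|
            ≤ C * Real.sqrt (qfun θ φ u v) := by
  refine ⟨1, one_pos, fun θ _ φ _ u hu v hv => ?_⟩
  obtain ⟨hu1, hu2⟩ := hu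
  obtain ⟨hv1, hv2⟩ := hv
  set a := Real.sin (θ / 2)
  set b := Real.cos (θ / 2)
  set c := Real.sin (φ / 2)
  set d := Real.cos (φ / 2)
  have hab : a ^ 2 + b ^ 2 = 1 := Real.sin_sq_add_cos_sq _
  have hcd : c ^ 2 + d ^ 2 = 1 := Real.sin_sq_add_cos_sq _
  have key : ∀ E : ℝ, E ^ 2 ≤ qfun θ φ u v → |E| ≤ 1 * Real.sqrt (qfun θ φ u v) := by
    intro E hE
    rw [one_mul, ← Real.sqrt_sq_eq_abs]
    exact Real.sqrt_le_sqrt hE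
  have hu' : u ^ 2 ≤ 1 := by nlinarith
  have hv' : v ^ 2 ≤ 1 := by nlinarith
  constructor
  · apply key
    have h : (u * a * c + v * b * d) ^ 2 + (-u * b * c + v * a * d) ^ 2 ≤ 1 := by
      nlinarith [mul_nonneg (by linarith : (0:ℝ) ≤ 1 - u ^ 2) (sq_nonneg c),
        mul_nonneg (by linarith : (0:ℝ) ≤ 1 - v ^ 2) (sq_nonneg d)]
    simp only [qfun]
    nlinarith [sq_nonneg (-u * b * c + v * a * d), sq_nonneg (u * a * c + v * b * d - 1)]
  · apply key
    have h : (u * a * c + v * b * d) ^ 2 + (-u * a * d + v * b * c) ^ 2 ≤ 1 := by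
      nlinarith [mul_nonneg (by linarith : (0:ℝ) ≤ 1 - u ^ 2) (sq_nonneg a),
        mul_nonneg (by linarith : (0:ℝ) ≤ 1 - v ^ 2) (sq_nonneg b)]
    simp only [qfun]
    nlinarith [sq_nonneg (-u * a * d + v * b * c), sq_nonneg (u * a * c + v * b * d - 1)]
end

section
/- Let α, β ≥ -1/2 and m, n ≥ 0 be integers. There exist a constant C and a constant ζ > 0 (both depending only on α, β, m, n), where in the exceptional case m = n = 0 and α+β = -1 one takes ζ = 0, such that for all θ, φ ∈ (0,π), u, v ∈ [-1,1] and t > 0: |∂_θ^n ∂_t^m Ψ^{α,β}(t, q(θ,φ,u,v))| ≤ C (t² + q(θ,φ,u,v))^{-(α+β+3/2)-(m+n)/2} when t ≤ 1, and |∂_θ^n ∂_t^m Ψ^{α,β}(t, q(θ,φ,u,v))| ≤ C exp(-ζ t) when t > 1. -/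
/-!
With `x = e^{-t/2}` and `E = (1 - x)² + 2xq` one has `cosh (t/2) - 1 + q = E / (2x)`, so for
`γ = α + β + 2` the function `Ψ` is a combination of terms
`c x^(γ-1+j) (1 - x)^a (∂_θ q)^e q^f E^(-(γ+k))`. Because `∂_θ² q = (1 - q)/4`, this class is
closed under `∂_t` and `∂_θ`, and every derivative preserves `2k + 1 ≤ a + e + 2f + N`, where
`N` counts the derivatives taken. For `t ≤ 1` we have `E ≍ t² + q` and `1 - x, |∂_θ q|, √q ≲ √E`,
so each term is `O(E^((a+e+2f)/2 - γ - k)) = O((t² + q)^(1/2 - γ - N/2))`. For `t > 1` the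
factor `E` is bounded below and `x^(γ-1+j)` supplies the decay `e^{-ζt}`; when `γ = 1` the
terms with `j = 0` drop out after the first derivative, which is why `ζ > 0` unless `N = 0`.
-/

open MeasureTheory Real Set

theorem iteratedDeriv_eqOn_of_hasDerivAt {𝕜 F : Type*} [NontriviallyNormedField 𝕜]
    [NormedAddCommGroup F] [NormedSpace 𝕜 F] {U : Set 𝕜} (hU : IsOpen U) {f : 𝕜 → F}
    {D : ℕ → 𝕜 → F} (h₀ : EqOn f (D 0) U) (hD : ∀ k, ∀ x ∈ U, HasDerivAt (D k) (D (k + 1) x) x)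
    (n : ℕ) : EqOn (iteratedDeriv n f) (D n) U := by
  induction n with
  | zero => simpa using h₀
  | succ n ih =>
    intro x hx
    rw [iteratedDeriv_succ, ← (hD n x hx).deriv]
    exact Filter.EventuallyEq.deriv_eq (Filter.eventuallyEq_of_mem (hU.mem_nhds hx) ih)

theorem forall_mem_iterate_flatMap {α : Type*} {P : ℕ → α → Prop} {d : α → List α}
    (hd : ∀ N a, P N a → ∀ b ∈ d a, P (N + 1) b) (n : ℕ) {N : ℕ} {L : List α}
    (hL : ∀ a ∈ L, P N a) : ∀ b ∈ (List.flatMap d)^[n] L, P (N + n) b := by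
  induction n generalizing N L with
  | zero => simpa using hL
  | succ n ih =>
    rw [Function.iterate_succ_apply, ← add_assoc, Nat.add_right_comm]
    refine ih fun b hb => ?_
    obtain ⟨a, ha, hb⟩ := List.mem_flatMap.1 hb
    exact hd N a (hL a ha) b hb

theorem exists_pos_abs_list_sum_le_mul {ι P : Type*} {S : Set P} {e : P → ℝ}
    (he : ∀ p ∈ S, 0 ≤ e p) (f : ι → P → ℝ) (L : List ι)
    (hf : ∀ i ∈ L, ∃ C, ∀ p ∈ S, |f i p| ≤ C * e p) :
    ∃ C, 0 < C ∧ ∀ p ∈ S, |(L.map fun i => f i p).sum| ≤ C * e p := by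
  induction L with
  | nil => exact ⟨1, one_pos, fun p hp => by simpa using he p hp⟩
  | cons i L ih =>
    obtain ⟨C₁, hC₁⟩ := hf i List.mem_cons_self
    obtain ⟨C₂, hC₂, hC₂L⟩ := ih fun j hj => hf j (List.mem_cons_of_mem i hj)
    refine ⟨|C₁| + C₂, by positivity, fun p hp => ?_⟩
    calc |(List.map (fun i => f i p) (i :: L)).sum|
        ≤ |f i p| + |(L.map fun i => f i p).sum| := by simpa using abs_add_le _ _
      _ ≤ |C₁| * e p + C₂ * e p := by
        gcongr
        · exact (hC₁ p hp).trans (mul_le_mul_of_nonneg_right (le_abs_self C₁) (he p hp))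
        · exact hC₂L p hp
      _ = (|C₁| + C₂) * e p := by ring

theorem rpow_le_rpow_sub_mul_rpow {x a b σ τ : ℝ} (ha : 0 < a) (hx : x ∈ Icc a b) (hτ : τ ≤ 0)
    (hστ : τ ≤ σ) : x ^ σ ≤ b ^ (σ - τ) * a ^ τ := by
  have hx₀ : 0 < x := ha.trans_le hx.1
  calc x ^ σ = x ^ (σ - τ) * x ^ τ := by rw [← rpow_add hx₀, sub_add_cancel]
    _ ≤ b ^ (σ - τ) * a ^ τ :=
      mul_le_mul (rpow_le_rpow hx₀.le hx.2 (sub_nonneg.2 hστ)) (rpow_le_rpow_of_nonpos ha hx.1 hτ)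
        (rpow_nonneg hx₀.le τ) (rpow_nonneg (hx₀.le.trans hx.2) _)

namespace PsiExpansion

noncomputable def expNegHalf (t : ℝ) : ℝ := exp (-(t / 2))

lemma expNegHalf_pos (t : ℝ) : 0 < expNegHalf t := exp_pos _

lemma expNegHalf_lt_one {t : ℝ} (ht : 0 < t) : expNegHalf t < 1 := by
  rw [expNegHalf, Real.exp_lt_one_iff]; linarith

lemma expNegHalf_mul_exp_half (t : ℝ) : expNegHalf t * exp (t / 2) = 1 := by
  rw [expNegHalf, ← exp_add, neg_add_cancel, exp_zero]

lemma expNegHalf_mul_one_add_le_one {t : ℝ} (ht : 0 ≤ t) : expNegHalf t * (1 + t / 2) ≤ 1 := by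
  nlinarith [add_one_le_exp (t / 2), expNegHalf_mul_exp_half t, expNegHalf_pos t]

lemma one_half_le_expNegHalf {t : ℝ} (ht : t ≤ 1) : 1 / 2 ≤ expNegHalf t := by
  linarith [add_one_le_exp (-(t / 2)), show expNegHalf t = exp (-(t / 2)) from rfl]

lemma hasDerivAt_expNegHalf (t : ℝ) : HasDerivAt expNegHalf (-expNegHalf t / 2) t := by
  have h : HasDerivAt (fun s : ℝ => -(s / 2)) (-(1 / 2)) t :=
    (((hasDerivAt_id t).div_const 2).neg).congr_deriv (by norm_num)
  unfold expNegHalf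
  convert h.exp using 1
  ring

noncomputable def denom (t q : ℝ) : ℝ := (1 - expNegHalf t) ^ 2 + 2 * expNegHalf t * q

lemma denom_pos {t q : ℝ} (ht : 0 < t) (hq : 0 ≤ q) : 0 < denom t q := by
  have := expNegHalf_lt_one ht
  have := expNegHalf_pos t
  unfold denom; nlinarith

lemma cosh_sub_one_add_eq {t q : ℝ} :
    cosh (t / 2) - 1 + q = denom t q / (2 * expNegHalf t) := by
  have hx := expNegHalf_pos t
  rw [cosh_eq, eq_div_iff (by positivity), denom, ← expNegHalf]
  linear_combination expNegHalf_mul_exp_half t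

structure Term where
  c : ℝ
  j : ℕ
  a : ℕ
  e : ℕ
  f : ℕ
  k : ℕ

namespace Term

/-- `q1` stands for `∂_θ q`. -/
noncomputable def eval (γ : ℝ) (M : Term) (t q q1 : ℝ) : ℝ :=
  M.c * expNegHalf t ^ (γ - 1 + M.j) * (1 - expNegHalf t) ^ M.a * q1 ^ M.e * q ^ M.f *
    denom t q ^ (-(γ + M.k))

/-- In each child whose exponent is decremented the coefficient carries that exponent as a
factor, so the truncated subtraction at exponent `0` is harmless. -/
noncomputable def derivT (γ : ℝ) (M : Term) : List Term :=
  [⟨-(M.c * (γ - 1 + M.j)) / 2, M.j, M.a, M.e, M.f, M.k⟩,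
   ⟨M.c * M.a / 2, M.j + 1, M.a - 1, M.e, M.f, M.k⟩,
   ⟨-(M.c * (γ + M.k)), M.j + 1, M.a + 1, M.e, M.f, M.k + 1⟩,
   ⟨M.c * (γ + M.k), M.j + 1, M.a, M.e, M.f + 1, M.k + 1⟩]

noncomputable def derivθ (γ : ℝ) (M : Term) : List Term :=
  [⟨M.c * M.e / 4, M.j, M.a, M.e - 1, M.f, M.k⟩,
   ⟨-(M.c * M.e) / 4, M.j, M.a, M.e - 1, M.f + 1, M.k⟩,
   ⟨M.c * M.f, M.j, M.a, M.e + 1, M.f - 1, M.k⟩,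
   ⟨-(2 * M.c * (γ + M.k)), M.j + 1, M.a, M.e + 1, M.f, M.k + 1⟩]

end Term

noncomputable def evalSum (γ : ℝ) (L : List Term) (t q q1 : ℝ) : ℝ :=
  (L.map fun M => M.eval γ t q q1).sum

lemma rpow_natCast_add_one {x : ℝ} (hx : 0 < x) (p : ℝ) (i : ℕ) :
    x ^ (p + ((i : ℝ) + 1)) = x ^ (p + i) * x := by
  rw [← add_assoc, rpow_add_one hx.ne']

lemma rpow_neg_natCast_add_one {x : ℝ} (hx : 0 < x) (p : ℝ) (i : ℕ) :
    x ^ (-(p + ((i : ℝ) + 1))) = x ^ (-(p + i)) / x := by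
  rw [show -(p + ((i : ℝ) + 1)) = -(p + i) - 1 by ring, rpow_sub hx, rpow_one]

theorem Term.hasDerivAt_eval_t (γ : ℝ) (M : Term) {t q : ℝ} (ht : 0 < t) (hq : 0 ≤ q)
    (q1 : ℝ) :
    HasDerivAt (fun t' => M.eval γ t' q q1) (evalSum γ (M.derivT γ) t q q1) t := by
  have hx := expNegHalf_pos t
  have hE := denom_pos ht hq
  have hx' := hasDerivAt_expNegHalf t
  have h1x : HasDerivAt (fun s => 1 - expNegHalf s) (expNegHalf t / 2) t := by
    simpa [neg_div] using hx'.const_sub 1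
  have hE' : HasDerivAt (fun s => denom s q)
      (2 * (1 - expNegHalf t) ^ (2 - 1) * (expNegHalf t / 2) + 2 * (-expNegHalf t / 2) * q) t :=
    ((h1x.pow 2).add ((hx'.const_mul 2).mul_const q))
  refine (((((hx'.rpow_const (p := γ - 1 + M.j) (Or.inl hx.ne')).const_mul M.c).mul
    (h1x.pow M.a)).mul_const (q1 ^ M.e)).mul_const (q ^ M.f)).mul
    (hE'.rpow_const (p := -(γ + M.k)) (Or.inl hE.ne')) |>.congr_deriv ?_
  simp only [Pi.mul_apply, Pi.pow_apply, evalSum, Term.derivT, Term.eval, List.map_cons,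
    List.map_nil, List.sum_cons, List.sum_nil]
  push_cast
  rw [rpow_sub_one hx.ne', rpow_sub_one hE.ne', rpow_natCast_add_one hx,
    rpow_neg_natCast_add_one hE]
  field_simp
  ring

theorem Term.hasDerivAt_eval_θ (γ : ℝ) (M : Term) {t : ℝ} (ht : 0 < t) {Q Q1 : ℝ → ℝ} {θ : ℝ}
    (hQ : HasDerivAt Q (Q1 θ) θ) (hQ1 : HasDerivAt Q1 ((1 - Q θ) / 4) θ) (hq : 0 ≤ Q θ) :
    HasDerivAt (fun θ' => M.eval γ t (Q θ') (Q1 θ')) (evalSum γ (M.derivθ γ) t (Q θ) (Q1 θ)) θ := by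
  have hx := expNegHalf_pos t
  have hE := denom_pos ht hq
  have hE' : HasDerivAt (fun θ' => denom t (Q θ')) (2 * expNegHalf t * Q1 θ) θ := by
    simpa [denom] using (hQ.const_mul (2 * expNegHalf t)).const_add ((1 - expNegHalf t) ^ 2)
  refine (((hQ1.pow M.e).const_mul (M.c * expNegHalf t ^ (γ - 1 + M.j) *
    (1 - expNegHalf t) ^ M.a)).mul (hQ.pow M.f)).mul
    (hE'.rpow_const (p := -(γ + M.k)) (Or.inl hE.ne')) |>.congr_deriv ?_
  simp only [Pi.mul_apply, Pi.pow_apply, evalSum, Term.derivθ, Term.eval, List.map_cons,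
    List.map_nil, List.sum_cons, List.sum_nil]
  push_cast
  rw [rpow_sub_one hE.ne', rpow_natCast_add_one hx, rpow_neg_natCast_add_one hE]
  simp only [pow_succ]
  field_simp
  ring

theorem hasDerivAt_evalSum_t (γ : ℝ) (L : List Term) {t q : ℝ} (ht : 0 < t) (hq : 0 ≤ q)
    (q1 : ℝ) :
    HasDerivAt (fun t' => evalSum γ L t' q q1)
      (evalSum γ (L.flatMap (Term.derivT γ)) t q q1) t := by
  induction L with
  | nil => simpa [evalSum] using hasDerivAt_const t (0 : ℝ)
  | cons M L ih =>
    simp only [evalSum, List.map_cons, List.sum_cons, List.flatMap_cons, List.map_append,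
      List.sum_append] at ih ⊢
    exact (M.hasDerivAt_eval_t γ ht hq q1).add ih

theorem hasDerivAt_evalSum_θ (γ : ℝ) (L : List Term) {t : ℝ} (ht : 0 < t) {Q Q1 : ℝ → ℝ} {θ : ℝ}
    (hQ : HasDerivAt Q (Q1 θ) θ) (hQ1 : HasDerivAt Q1 ((1 - Q θ) / 4) θ) (hq : 0 ≤ Q θ) :
    HasDerivAt (fun θ' => evalSum γ L t (Q θ') (Q1 θ'))
      (evalSum γ (L.flatMap (Term.derivθ γ)) t (Q θ) (Q1 θ)) θ := by
  induction L with
  | nil => simpa [evalSum] using hasDerivAt_const θ (0 : ℝ)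
  | cons M L ih =>
    simp only [evalSum, List.map_cons, List.sum_cons, List.flatMap_cons, List.map_append,
      List.sum_append] at ih ⊢
    exact (M.hasDerivAt_eval_θ γ ht hQ hQ1 hq).add ih

noncomputable def psiTerms (γ : ℝ) : List Term :=
  [⟨2 ^ γ, 0, 1, 0, 0, 0⟩, ⟨-2 ^ (γ - 1), 0, 2, 0, 0, 0⟩]

theorem sinh_div_rpow_eq_evalSum_psiTerms (γ : ℝ) {t q : ℝ} (ht : 0 < t) (hq : 0 ≤ q) (q1 : ℝ) :
    sinh (t / 2) / (cosh (t / 2) - 1 + q) ^ γ = evalSum γ (psiTerms γ) t q q1 := by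
  have hx := expNegHalf_pos t
  have hE := denom_pos ht hq
  have hsinh : sinh (t / 2) = ((expNegHalf t)⁻¹ - expNegHalf t) / 2 := by
    rw [sinh_eq, expNegHalf, exp_neg, inv_inv]
  rw [cosh_sub_one_add_eq, div_rpow hE.le (by positivity), mul_rpow zero_le_two hx.le, hsinh]
  simp only [evalSum, psiTerms, Term.eval, List.map_cons, List.map_nil, List.sum_cons,
    List.sum_nil, Nat.cast_zero, add_zero, pow_zero, mul_one, rpow_neg hE.le,
    rpow_sub_one hx.ne', rpow_sub_one two_ne_zero]
  field_simp
  ring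

noncomputable def qDeriv (φ u v θ : ℝ) : ℝ :=
  (v * sin (θ / 2) * cos (φ / 2) - u * cos (θ / 2) * sin (φ / 2)) / 2

lemma hasDerivAt_sin_half (θ : ℝ) : HasDerivAt (fun θ' => sin (θ' / 2)) (cos (θ / 2) / 2) θ := by
  simpa [div_eq_mul_inv] using ((hasDerivAt_id θ).div_const 2).sin

lemma hasDerivAt_cos_half (θ : ℝ) :
    HasDerivAt (fun θ' => cos (θ' / 2)) (-sin (θ / 2) / 2) θ := by
  simpa [div_eq_mul_inv] using ((hasDerivAt_id θ).div_const 2).cos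

lemma hasDerivAt_qfun (φ u v θ : ℝ) :
    HasDerivAt (fun θ' => qfun θ' φ u v) (qDeriv φ u v θ) θ := by
  refine ((((hasDerivAt_sin_half θ).const_mul u).mul_const (sin (φ / 2))).const_sub 1).sub
    (((hasDerivAt_cos_half θ).const_mul v).mul_const (cos (φ / 2))) |>.congr_deriv ?_
  rw [qDeriv]; ring

lemma hasDerivAt_qDeriv (φ u v θ : ℝ) :
    HasDerivAt (qDeriv φ u v) ((1 - qfun θ φ u v) / 4) θ := by
  refine ((((hasDerivAt_sin_half θ).const_mul v).mul_const (cos (φ / 2))).sub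
    (((hasDerivAt_cos_half θ).const_mul u).mul_const (sin (φ / 2)))).div_const 2 |>.congr_deriv ?_
  rw [qfun]; ring

/-- Since `q - (∂_θ q)²` is concave in `(u, v)`, it suffices to check the four corners of
`[-1, 1]²`, where it reduces to `(sin x)² ≤ 2 (1 - cos x)`. -/
theorem qDeriv_sq_le_qfun {u v : ℝ} (hu : u ∈ Icc (-1 : ℝ) 1) (hv : v ∈ Icc (-1 : ℝ) 1)
    (θ φ : ℝ) : qDeriv φ u v θ ^ 2 ≤ qfun θ φ u v := by
  obtain ⟨hu₁, hu₂⟩ := hu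
  obtain ⟨hv₁, hv₂⟩ := hv
  have hθ := sin_sq_add_cos_sq (θ / 2)
  have hφ := sin_sq_add_cos_sq (φ / 2)
  rw [qDeriv, qfun]
  set s := sin (θ / 2)
  set c := cos (θ / 2)
  set s' := sin (φ / 2)
  set c' := cos (φ / 2)
  have h₁ : (s * c' - c * s') ^ 2 + (s * s' + c * c') ^ 2 = 1 := by
    linear_combination (s' ^ 2 + c' ^ 2) * hθ + hφ
  have h₂ : (s * c' + c * s') ^ 2 + (s * s' - c * c') ^ 2 = 1 := by
    linear_combination (s' ^ 2 + c' ^ 2) * hθ + hφ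
  have corner₁ : (s * c' - c * s') ^ 2 ≤ 2 * (1 - s * s' - c * c') := by
    nlinarith [sq_nonneg (1 - s * s' - c * c')]
  have corner₂ : (s * c' + c * s') ^ 2 ≤ 2 * (1 - s * s' + c * c') := by
    nlinarith [sq_nonneg (1 - s * s' + c * c')]
  have corner₃ : (s * c' + c * s') ^ 2 ≤ 2 * (1 + s * s' - c * c') := by
    nlinarith [sq_nonneg (1 + s * s' - c * c')]
  have corner₄ : (s * c' - c * s') ^ 2 ≤ 2 * (1 + s * s' + c * c') := by
    nlinarith [sq_nonneg (1 + s * s' + c * c')]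
  nlinarith [mul_nonneg (mul_nonneg (by linarith : 0 ≤ 1 + u) (by linarith : 0 ≤ 1 + v))
      (sub_nonneg.2 corner₁),
    mul_nonneg (mul_nonneg (by linarith : 0 ≤ 1 + u) (by linarith : 0 ≤ 1 - v))
      (sub_nonneg.2 corner₂),
    mul_nonneg (mul_nonneg (by linarith : 0 ≤ 1 - u) (by linarith : 0 ≤ 1 + v))
      (sub_nonneg.2 corner₃),
    mul_nonneg (mul_nonneg (by linarith : 0 ≤ 1 - u) (by linarith : 0 ≤ 1 - v))
      (sub_nonneg.2 corner₄),
    mul_nonneg (sq_nonneg (c * s')) (by nlinarith : 0 ≤ 1 - u ^ 2),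
    mul_nonneg (sq_nonneg (s * c')) (by nlinarith : 0 ≤ 1 - v ^ 2)]

theorem qfun_nonneg {u v : ℝ} (hu : u ∈ Icc (-1 : ℝ) 1) (hv : v ∈ Icc (-1 : ℝ) 1) (θ φ : ℝ) :
    0 ≤ qfun θ φ u v :=
  (sq_nonneg _).trans (qDeriv_sq_le_qfun hu hv θ φ)

theorem qfun_le_two {u v : ℝ} (hu : u ∈ Icc (-1 : ℝ) 1) (hv : v ∈ Icc (-1 : ℝ) 1) (θ φ : ℝ) :
    qfun θ φ u v ≤ 2 := by
  have h := qfun_nonneg (u := -u) (v := -v) ⟨by linarith [hu.2], by linarith [hu.1]⟩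
    ⟨by linarith [hv.2], by linarith [hv.1]⟩ θ φ
  simp only [qfun] at h ⊢
  linarith

theorem iteratedDeriv_Psi_eq_evalSum (α β : ℝ) {φ u v t : ℝ} (hu : u ∈ Icc (-1 : ℝ) 1)
    (hv : v ∈ Icc (-1 : ℝ) 1) (ht : 0 < t) (m n : ℕ) (θ : ℝ) :
    iteratedDeriv n (fun θ' => iteratedDeriv m (fun t' => Psi α β t' (qfun θ' φ u v)) t) θ =
      evalSum (α + β + 2) ((List.flatMap (Term.derivθ (α + β + 2)))^[n]
        ((List.flatMap (Term.derivT (α + β + 2)))^[m] (psiTerms (α + β + 2))))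
        t (qfun θ φ u v) (qDeriv φ u v θ) := by
  set γ := α + β + 2
  have hq := qfun_nonneg hu hv
  have inner (θ' : ℝ) : iteratedDeriv m (fun t' => Psi α β t' (qfun θ' φ u v)) t =
      evalSum γ ((List.flatMap (Term.derivT γ))^[m] (psiTerms γ)) t
        (qfun θ' φ u v) (qDeriv φ u v θ') :=
    iteratedDeriv_eqOn_of_hasDerivAt isOpen_Ioi
      (D := fun k t' => evalSum γ ((List.flatMap (Term.derivT γ))^[k] (psiTerms γ)) t'
        (qfun θ' φ u v) (qDeriv φ u v θ'))
      (fun s hs => sinh_div_rpow_eq_evalSum_psiTerms γ hs (hq θ' φ) _)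
      (fun k s hs => by
        simpa only [Function.iterate_succ_apply'] using hasDerivAt_evalSum_t γ _ hs (hq θ' φ) _)
      m ht
  simp_rw [inner]
  exact iteratedDeriv_eqOn_of_hasDerivAt isOpen_univ
    (D := fun k θ' => evalSum γ ((List.flatMap (Term.derivθ γ))^[k]
      ((List.flatMap (Term.derivT γ))^[m] (psiTerms γ))) t (qfun θ' φ u v) (qDeriv φ u v θ'))
    (fun _ _ => rfl)
    (fun k θ' _ => by
      simpa only [Function.iterate_succ_apply'] using hasDerivAt_evalSum_θ γ _ ht
        (hasDerivAt_qfun φ u v θ') (hasDerivAt_qDeriv φ u v θ') (hq θ' φ))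
    n (mem_univ θ)

lemma denom_mem_Icc_of_le_one {t q : ℝ} (ht : 0 < t) (ht₁ : t ≤ 1) (hq : 0 ≤ q) (hq₂ : q ≤ 2) :
    denom t q ∈ Icc ((t ^ 2 + q) / 16) 5 := by
  have hx₁ := expNegHalf_lt_one ht
  have hx := expNegHalf_mul_one_add_le_one ht.le
  have hx₀ := one_half_le_expNegHalf ht₁
  have h₁ : t / 4 ≤ 1 - expNegHalf t := by nlinarith
  constructor <;> unfold denom <;> nlinarith

lemma one_ninth_le_denom {t q : ℝ} (ht₁ : 1 < t) (hq : 0 ≤ q) : 1 / 9 ≤ denom t q := by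
  have hx₀ := expNegHalf_pos t
  have hx := expNegHalf_mul_one_add_le_one (zero_le_one.trans ht₁.le)
  have h₁ : 1 / 3 ≤ 1 - expNegHalf t := by nlinarith
  unfold denom; nlinarith [mul_nonneg hx₀.le hq]

namespace Term

noncomputable def weight (γ : ℝ) (M : Term) : ℝ := (M.a + M.e + 2 * M.f) / 2 - (γ + M.k)

lemma abs_eval_eq (γ : ℝ) (M : Term) {t q : ℝ} (ht : 0 < t) (hq : 0 ≤ q) (q1 : ℝ) :
    |M.eval γ t q q1| = |M.c| * expNegHalf t ^ (γ - 1 + M.j) *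
      ((1 - expNegHalf t) ^ M.a * |q1| ^ M.e * q ^ M.f) * denom t q ^ (-(γ + M.k)) := by
  have hx₁ := expNegHalf_lt_one ht
  simp only [eval, abs_mul, abs_pow, abs_of_nonneg (rpow_nonneg (expNegHalf_pos t).le _),
    abs_of_nonneg (sub_nonneg.2 hx₁.le), abs_of_nonneg hq,
    abs_of_nonneg (rpow_nonneg (denom_pos ht hq).le _)]
  ring

/-- For `t ≤ 1` the factors `1 - x`, `|∂_θ q|` and `√q` are all at most `√E`. -/
theorem abs_eval_le_of_le_one {γ : ℝ} (hγ : 1 ≤ γ) {N : ℕ} (M : Term)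
    (hM : 2 * M.k + 1 ≤ M.a + M.e + 2 * M.f + N) {t q q1 : ℝ} (ht : 0 < t) (ht₁ : t ≤ 1)
    (hq : 0 ≤ q) (hq₂ : q ≤ 2) (hq1 : q1 ^ 2 ≤ q) :
    |M.eval γ t q q1| ≤
      |M.c| * 5 ^ (M.weight γ - (1 / 2 - γ - N / 2)) / 16 ^ (1 / 2 - γ - N / 2 : ℝ) *
        (t ^ 2 + q) ^ (1 / 2 - γ - N / 2 : ℝ) := by
  set τ : ℝ := 1 / 2 - γ - N / 2
  have hx₀ := expNegHalf_pos t
  have hx₁ := expNegHalf_lt_one ht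
  have hE := denom_pos ht hq
  have hEI := denom_mem_Icc_of_le_one ht ht₁ hq hq₂
  have hx := one_half_le_expNegHalf ht₁
  have h₁ : 1 - expNegHalf t ≤ √(denom t q) :=
    le_sqrt_of_sq_le (by unfold denom; nlinarith [mul_nonneg hx₀.le hq])
  have h₂ : |q1| ≤ √(denom t q) := abs_le_sqrt (by unfold denom; nlinarith)
  have h₃ : q ≤ √(denom t q) ^ 2 := by rw [sq_sqrt hE.le]; unfold denom; nlinarith
  have hmid : (1 - expNegHalf t) ^ M.a * |q1| ^ M.e * q ^ M.f ≤
      denom t q ^ (((M.a + M.e + 2 * M.f : ℕ) : ℝ) / 2) := by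
    rw [rpow_div_two_eq_sqrt _ hE.le, rpow_natCast, pow_add, pow_add, pow_mul]
    gcongr
  have hweight : denom t q ^ (((M.a + M.e + 2 * M.f : ℕ) : ℝ) / 2) * denom t q ^ (-(γ + M.k))
      = denom t q ^ M.weight γ := by
    rw [← rpow_add hE, weight]; push_cast; ring_nf
  have hτ : τ ≤ M.weight γ := by
    have : (2 * M.k + 1 : ℝ) ≤ M.a + M.e + 2 * M.f + N := by exact_mod_cast hM
    simp only [τ, weight]; linarith
  have hτ₀ : τ ≤ 0 := by simp only [τ]; linarith [(N.cast_nonneg : (0 : ℝ) ≤ N)]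
  have hp : 0 ≤ γ - 1 + M.j := by linarith [(M.j.cast_nonneg : (0 : ℝ) ≤ M.j)]
  calc |M.eval γ t q q1|
      = |M.c| * expNegHalf t ^ (γ - 1 + M.j) *
          ((1 - expNegHalf t) ^ M.a * |q1| ^ M.e * q ^ M.f) * denom t q ^ (-(γ + M.k)) :=
        M.abs_eval_eq γ ht hq q1
    _ ≤ |M.c| * 1 * denom t q ^ (((M.a + M.e + 2 * M.f : ℕ) : ℝ) / 2) *
          denom t q ^ (-(γ + M.k)) := by
        gcongr
        exact rpow_le_one hx₀.le hx₁.le hp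
    _ = |M.c| * denom t q ^ M.weight γ := by rw [mul_one, mul_assoc, hweight]
    _ ≤ |M.c| * (5 ^ (M.weight γ - τ) * ((t ^ 2 + q) / 16) ^ τ) := by
        gcongr
        exact rpow_le_rpow_sub_mul_rpow (by positivity) hEI hτ₀ hτ
    _ = _ := by rw [div_rpow (by positivity) (by norm_num)]; ring

theorem abs_eval_le_of_one_lt {γ ζ : ℝ} (hγ : 0 ≤ γ) (M : Term) (hζ : 2 * ζ ≤ γ - 1 + M.j)
    {t q q1 : ℝ} (ht₁ : 1 < t) (hq : 0 ≤ q) (hq₂ : q ≤ 2) (hq1 : q1 ^ 2 ≤ q) :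
    |M.eval γ t q q1| ≤ |M.c| * 2 ^ (M.e + M.f) * 9 ^ (γ + M.k) * exp (-ζ * t) := by
  have ht : 0 < t := zero_lt_one.trans ht₁
  have hx₁ := expNegHalf_lt_one ht
  have hE := one_ninth_le_denom ht₁ hq
  have hdecay : expNegHalf t ^ (γ - 1 + M.j) ≤ exp (-ζ * t) := by
    rw [expNegHalf, ← exp_mul]
    exact exp_le_exp.2 (by nlinarith)
  have hq1₂ : |q1| ≤ 2 := abs_le.2 ⟨by nlinarith, by nlinarith⟩
  have hmid : (1 - expNegHalf t) ^ M.a * |q1| ^ M.e * q ^ M.f ≤ 1 * 2 ^ M.e * 2 ^ M.f := by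
    gcongr
    exact pow_le_one₀ (sub_nonneg.2 hx₁.le) (by linarith [expNegHalf_pos t])
  have hden : denom t q ^ (-(γ + M.k)) ≤ 9 ^ (γ + M.k) := by
    calc denom t q ^ (-(γ + M.k)) ≤ (1 / 9 : ℝ) ^ (-(γ + M.k)) :=
          rpow_le_rpow_of_nonpos (by norm_num) hE (by linarith [(M.k.cast_nonneg : (0 : ℝ) ≤ M.k)])
      _ = 9 ^ (γ + M.k) := by
        rw [one_div, inv_rpow (by norm_num), ← rpow_neg (by norm_num), neg_neg]
  calc |M.eval γ t q q1|
      = |M.c| * expNegHalf t ^ (γ - 1 + M.j) *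
          ((1 - expNegHalf t) ^ M.a * |q1| ^ M.e * q ^ M.f) * denom t q ^ (-(γ + M.k)) :=
        M.abs_eval_eq γ ht hq q1
    _ ≤ |M.c| * exp (-ζ * t) * (1 * 2 ^ M.e * 2 ^ M.f) * 9 ^ (γ + M.k) := by gcongr
    _ = _ := by ring

/-- `N` counts the derivatives taken; the second clause yields the exponential decay when
`γ = 1`. -/
def Admissible (γ : ℝ) (N : ℕ) (M : Term) : Prop :=
  2 * M.k + 1 ≤ M.a + M.e + 2 * M.f + N ∧
    (γ = 1 → M.c = 0 ∨ 1 ≤ M.j ∨ (N = 0 ∧ M.e = 0 ∧ M.f = 0))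

theorem Admissible.derivT {γ : ℝ} {N : ℕ} {M : Term} (hM : M.Admissible γ N) :
    ∀ M' ∈ M.derivT γ, M'.Admissible γ (N + 1) := by
  obtain ⟨hk, hγ⟩ := hM
  simp only [Term.derivT, List.mem_cons, List.not_mem_nil, or_false]
  rintro M' (rfl | rfl | rfl | rfl) <;> refine ⟨by dsimp only; omega, fun h => ?_⟩ <;>
    simp only [Nat.le_add_left, true_or, or_true]
  rcases hγ h with hc | hj | ⟨-, -, -⟩
  · simp [hc]
  · exact Or.inr (Or.inl hj)
  · rcases Nat.eq_zero_or_pos M.j with hj | hj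
    · simp [h, hj]
    · exact Or.inr (Or.inl hj)

theorem Admissible.derivθ {γ : ℝ} {N : ℕ} {M : Term} (hM : M.Admissible γ N) :
    ∀ M' ∈ M.derivθ γ, M'.Admissible γ (N + 1) := by
  obtain ⟨hk, hγ⟩ := hM
  simp only [Term.derivθ, List.mem_cons, List.not_mem_nil, or_false]
  rintro M' (rfl | rfl | rfl | rfl) <;> refine ⟨by dsimp only; omega, fun h => ?_⟩ <;>
    simp only [Nat.le_add_left, true_or, or_true] <;>
    rcases hγ h with hc | hj | ⟨-, he, hf⟩ <;> simp_all

end Term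

noncomputable def decayRate (γ : ℝ) (N : ℕ) : ℝ :=
  if γ = 1 then (if N = 0 then 0 else 1 / 2) else (γ - 1) / 2

theorem decayRate_pos {γ : ℝ} (hγ : 1 ≤ γ) {N : ℕ} (h : ¬(γ = 1 ∧ N = 0)) :
    0 < decayRate γ N := by
  unfold decayRate
  split_ifs with h₁ h₂
  · exact absurd ⟨h₁, h₂⟩ h
  · norm_num
  · linarith [lt_of_le_of_ne hγ (Ne.symm h₁)]

theorem Term.Admissible.two_mul_decayRate_le {γ : ℝ} {N : ℕ} {M : Term} (hM : M.Admissible γ N)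
    (hc : M.c ≠ 0) : 2 * decayRate γ N ≤ γ - 1 + M.j := by
  have hj : (0 : ℝ) ≤ M.j := M.j.cast_nonneg
  unfold decayRate
  split_ifs with hγ hN
  · linarith
  · rcases hM.2 hγ with hc' | hj' | ⟨hN', -, -⟩
    · exact absurd hc' hc
    · have : (1 : ℝ) ≤ M.j := by exact_mod_cast hj'
      linarith
    · exact absurd hN' hN
  · linarith

theorem admissible_psiTerms (γ : ℝ) : ∀ M ∈ psiTerms γ, M.Admissible γ 0 := by
  simp only [psiTerms, List.mem_cons, List.not_mem_nil, or_false]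
  rintro M (rfl | rfl) <;> exact ⟨by simp, fun _ => Or.inr (Or.inr ⟨rfl, rfl, rfl⟩)⟩

theorem admissible_iterate_derivθ_derivT (γ : ℝ) (m n : ℕ) :
    ∀ M ∈ (List.flatMap (Term.derivθ γ))^[n] ((List.flatMap (Term.derivT γ))^[m] (psiTerms γ)),
      M.Admissible γ (m + n) := by
  have hT := forall_mem_iterate_flatMap (fun _ _ h => h.derivT) m (admissible_psiTerms γ)
  rw [zero_add] at hT
  exact forall_mem_iterate_flatMap (fun _ _ h => h.derivθ) n hT

noncomputable def envelope (γ ζ : ℝ) (N : ℕ) (t q : ℝ) : ℝ :=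
  if t ≤ 1 then (t ^ 2 + q) ^ (1 / 2 - γ - N / 2 : ℝ) else exp (-ζ * t)

/-- The range of `(t, q, ∂_θ q)`. -/
def region : Set (ℝ × ℝ × ℝ) := {p | 0 < p.1 ∧ 0 ≤ p.2.1 ∧ p.2.1 ≤ 2 ∧ p.2.2 ^ 2 ≤ p.2.1}

lemma envelope_nonneg (γ ζ : ℝ) (N : ℕ) {t q : ℝ} (ht : 0 < t) (hq : 0 ≤ q) :
    0 ≤ envelope γ ζ N t q := by
  unfold envelope
  split_ifs
  · exact rpow_nonneg (by positivity) _
  · exact (exp_pos _).le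

theorem Term.Admissible.exists_abs_eval_le_envelope {γ : ℝ} (hγ : 1 ≤ γ) {N : ℕ} {M : Term}
    (hM : M.Admissible γ N) :
    ∃ C, ∀ p ∈ region,
      |M.eval γ p.1 p.2.1 p.2.2| ≤ C * envelope γ (decayRate γ N) N p.1 p.2.1 := by
  by_cases hc : M.c = 0
  · exact ⟨0, fun _ _ => by simp [Term.eval, hc]⟩
  set τ : ℝ := 1 / 2 - γ - N / 2
  set A := |M.c| * 5 ^ (M.weight γ - τ) / 16 ^ τ
  set B := |M.c| * 2 ^ (M.e + M.f) * 9 ^ (γ + M.k)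
  refine ⟨A + B, fun ⟨t, q, q1⟩ ⟨ht, hq, hq₂, hq1⟩ => ?_⟩
  have henv := envelope_nonneg γ (decayRate γ N) N ht hq
  dsimp only at henv ⊢
  by_cases ht₁ : t ≤ 1
  · calc |M.eval γ t q q1| ≤ A * envelope γ (decayRate γ N) N t q := by
          rw [envelope, if_pos ht₁]; exact M.abs_eval_le_of_le_one hγ hM.1 ht ht₁ hq hq₂ hq1
      _ ≤ (A + B) * envelope γ (decayRate γ N) N t q := by
        gcongr; exact le_add_of_nonneg_right (by positivity)
  · calc |M.eval γ t q q1| ≤ B * envelope γ (decayRate γ N) N t q := by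
          rw [envelope, if_neg ht₁]
          exact M.abs_eval_le_of_one_lt (by linarith) (hM.two_mul_decayRate_le hc)
            (not_le.1 ht₁) hq hq₂ hq1
      _ ≤ (A + B) * envelope γ (decayRate γ N) N t q := by
        gcongr; exact le_add_of_nonneg_left (by positivity)

theorem exists_abs_evalSum_le_envelope {γ : ℝ} (hγ : 1 ≤ γ) {N : ℕ} {L : List Term}
    (hL : ∀ M ∈ L, M.Admissible γ N) :
    ∃ C, 0 < C ∧ ∀ p ∈ region,
      |evalSum γ L p.1 p.2.1 p.2.2| ≤ C * envelope γ (decayRate γ N) N p.1 p.2.1 :=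
  exists_pos_abs_list_sum_le_mul (fun _ hp => envelope_nonneg _ _ _ hp.1 hp.2.1) _ L
    fun M hM => (hL M hM).exists_abs_eval_le_envelope hγ

end PsiExpansion

open PsiExpansion

/-- Lemma 4.8 in [NoSjogren], first estimate. -/
theorem Psi_derivative_bounds (α β : ℝ) (hα : -(1 / 2) ≤ α) (hβ : -(1 / 2) ≤ β) (m n : ℕ) :
    ∃ C ζ : ℝ, 0 < C ∧
      ((m = 0 ∧ n = 0 ∧ α + β = -1) → ζ = 0) ∧
      (¬(m = 0 ∧ n = 0 ∧ α + β = -1) → 0 < ζ) ∧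
      ∀ θ ∈ Ioo (0 : ℝ) π, ∀ φ ∈ Ioo (0 : ℝ) π,
        ∀ u ∈ Icc (-1 : ℝ) 1, ∀ v ∈ Icc (-1 : ℝ) 1, ∀ t : ℝ, 0 < t →
          (t ≤ 1 →
            |iteratedDeriv n
                (fun θ' => iteratedDeriv m (fun t' => Psi α β t' (qfun θ' φ u v)) t) θ|
              ≤ C * (t ^ 2 + qfun θ φ u v) ^
                  (-(α + β + 3 / 2) - ((m : ℝ) + (n : ℝ)) / 2)) ∧
          (1 < t →
            |iteratedDeriv n
                (fun θ' => iteratedDeriv m (fun t' => Psi α β t' (qfun θ' φ u v)) t) θ|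
              ≤ C * Real.exp (-ζ * t)) := by
  have hγ : 1 ≤ α + β + 2 := by linarith
  obtain ⟨C, hC, hbound⟩ :=
    exists_abs_evalSum_le_envelope hγ (admissible_iterate_derivθ_derivT (α + β + 2) m n)
  refine ⟨C, decayRate (α + β + 2) (m + n), hC, ?_, ?_, ?_⟩
  · rintro ⟨rfl, rfl, h⟩
    simp [decayRate, show α + β + 2 = 1 by linarith]
  · exact fun h => decayRate_pos hγ fun ⟨h₁, h₂⟩ => h ⟨by omega, by omega, by linarith⟩
  intro θ _ φ _ u hu v hv t ht
  rw [iteratedDeriv_Psi_eq_evalSum α β hu hv ht]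
  have h := hbound (t, qfun θ φ u v, qDeriv φ u v θ)
    ⟨ht, qfun_nonneg hu hv θ φ, qfun_le_two hu hv θ φ, qDeriv_sq_le_qfun hu hv θ φ⟩
  refine ⟨fun ht₁ => ?_, fun ht₁ => ?_⟩
  · rw [envelope, if_pos ht₁] at h
    convert h using 3
    push_cast
    ring
  · rwa [envelope, if_neg ht₁.not_ge] at h
end
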